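/- arXiv:2103.06683 — 7 statements merged into one kernel-verified Lean document; each statement's English description precedes it below -/
import Mathlib

section
/- For every n ≥ 2, the extended hypercube Q^ext_n is a median graph, and for any leaves x_i, x_j with i ≠ j and x_k, x_l with k ≠ l such that {i,j} ≠ {k,l}, the medians satisfy med(ρ, x_i, x_j) ≠ med(ρ, x_k, x_l), where ρ is the root of Q^ext_n. -/
/-- `m` is a median of the triple `u, v, w` in `G`. -/
def IsMedianVtx {V : Type*} (G : SimpleGraph V) (u v w m : V) : Prop :=
  G.dist u m + G.dist m v = G.dist u v ∧
  G.dist v m + G.dist m w = G.dist v w ∧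
  G.dist u m + G.dist m w = G.dist u w

/-- A median graph: a connected graph in which every triple of vertices has a
unique median. -/
def IsMedianGraph {V : Type*} (G : SimpleGraph V) : Prop :=
  G.Connected ∧ ∀ u v w : V, ∃! m : V, IsMedianVtx G u v w m

/-- The `i`-th standard unit vector of `{0,1}^n`: the vertex whose `i`-th
coordinate is `1` and all other coordinates are `0`. -/
def unitVec (n : ℕ) (i : Fin n) : Fin n → Bool := fun j => if j = i then true else false

/-- The extended hypercube `Q^ext_n`: the hypercube `Q_n` on `{0,1}^n` (edges between
vertices at Hamming distance `1`), together with `n` additional leaves `x_1, …, x_n`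
(encoded as `Sum.inr i`), where `x_i` is adjacent exactly to the unit vector `e_i`. -/
def extHypercube (n : ℕ) : SimpleGraph ((Fin n → Bool) ⊕ Fin n) where
  Adj x y :=
    match x, y with
    | Sum.inl a, Sum.inl b => hammingDist a b = 1
    | Sum.inl a, Sum.inr i => a = unitVec n i
    | Sum.inr i, Sum.inl a => a = unitVec n i
    | Sum.inr _, Sum.inr _ => False
  symm := by
    constructor
    rintro (a | i) (b | j) h
    · show hammingDist b a = 1
      rw [hammingDist_comm]
      exact h
    · exact h
    · exact h
    · exact h
  loopless := by
    constructor
    rintro (a | i) h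
    · have h' : hammingDist a a = 1 := h
      rw [hammingDist_self] at h'
      exact one_ne_zero h'.symm
    · exact h

/-- The root of the extended hypercube: the all-ones vertex `(1, …, 1)`. -/
def qRoot (n : ℕ) : (Fin n → Bool) ⊕ Fin n := Sum.inl (fun _ => true)
/-!
A leaf `x_i` is pendant at `e_i`, so `d(x_i, v) = d(e_i, v) + 1` for every `v ≠ x_i`. Hence a
leaf never lies on a geodesic between two other vertices, and in a triple containing `x_i` it can
be replaced by `e_i` without changing the set of medians. This reduces everything to triples of
cube vertices, where the graph distance is the Hamming distance, betweenness holds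
coordinatewise, and the unique median is the coordinatewise majority. For `ρ, x_i, x_j` this
majority is the indicator vector of `{i, j}`, which determines `{i, j}`.
-/

open SimpleGraph

section Median

variable {V : Type*} {G : SimpleGraph V} {u v w m x y : V}

theorem isMedianVtx_comm_left : IsMedianVtx G u v w m ↔ IsMedianVtx G v u w m := by
  simp only [IsMedianVtx, dist_comm (u := m), dist_comm (u := v) (v := u)]
  omega

theorem isMedianVtx_comm_right : IsMedianVtx G u v w m ↔ IsMedianVtx G u w v m := by
  simp only [IsMedianVtx, dist_comm (u := m), dist_comm (u := w) (v := v)]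
  omega

theorem isMedianVtx_rotate : IsMedianVtx G u v w m ↔ IsMedianVtx G v w u m :=
  isMedianVtx_comm_left.trans isMedianVtx_comm_right

theorem isMedianVtx_self_left_iff (hG : G.Connected) : IsMedianVtx G u u w m ↔ m = u := by
  refine ⟨?_, by rintro rfl; simp [IsMedianVtx]⟩
  rintro ⟨h, -, -⟩
  rw [dist_self, dist_comm] at h
  exact (hG.dist_eq_zero_iff.1 (by omega : G.dist m u = 0))

theorem existsUnique_isMedianVtx_self_left (hG : G.Connected) : ∃! m, IsMedianVtx G u u w m :=
  ⟨u, (isMedianVtx_self_left_iff hG).2 rfl, fun _ => (isMedianVtx_self_left_iff hG).1⟩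

section Pendant

variable (hG : G.Connected) (hx : ∀ z, G.Adj x z ↔ z = y)
include hG hx

theorem dist_pendant (hv : v ≠ x) : G.dist x v = G.dist y v + 1 := by
  have hxy : G.dist x y = 1 := dist_eq_one_iff_adj.2 ((hx y).2 rfl)
  refine le_antisymm (by linarith [hG.dist_triangle (u := x) (v := y) (w := v)]) ?_
  obtain ⟨p, hp⟩ := (hG x v).exists_walk_length_eq_dist
  cases p with
  | nil => exact absurd rfl hv
  | cons h q =>
    obtain rfl := (hx _).1 h
    rw [← hp, Walk.length_cons]
    exact Nat.succ_le_succ (dist_le q)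

theorem not_between_pendant (hu : u ≠ x) (hv : v ≠ x) :
    G.dist u x + G.dist x v ≠ G.dist u v := by
  rw [dist_comm, dist_pendant hG hx hu, dist_pendant hG hx hv, dist_comm (u := y)]
  linarith [hG.dist_triangle (u := u) (v := y) (w := v)]

theorem isMedianVtx_pendant_iff (hv : v ≠ x) (hw : w ≠ x) :
    IsMedianVtx G x v w m ↔ IsMedianVtx G y v w m := by
  by_cases hm : m = x
  · subst hm
    have hy : y ≠ m := fun h => G.loopless.irrefl m (by simpa [h] using (hx y).2 rfl)
    exact iff_of_false (fun h => not_between_pendant hG hx hv hw h.2.1)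
      (fun h => not_between_pendant hG hx hy hv h.1)
  · simp only [IsMedianVtx, dist_pendant hG hx hm, dist_pendant hG hx hv,
      dist_pendant hG hx hw]
    omega

theorem existsUnique_isMedianVtx_pendant (h : ∃! m, IsMedianVtx G y v w m) :
    ∃! m, IsMedianVtx G x v w m := by
  by_cases hv : v = x
  · exact hv ▸ existsUnique_isMedianVtx_self_left hG
  by_cases hw : w = x
  · subst hw
    exact (existsUnique_congr fun _ => isMedianVtx_comm_right).2
      (existsUnique_isMedianVtx_self_left hG)
  exact (existsUnique_congr fun _ => isMedianVtx_pendant_iff hG hx hv hw).2 h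

end Pendant

end Median

section Hamming

variable {ι : Type*} {β : ι → Type*} [Fintype ι] [∀ i, DecidableEq (β i)]

theorem hammingDist_eq_sum (a b : ∀ i, β i) :
    hammingDist a b = ∑ i, if a i ≠ b i then 1 else 0 := by
  rw [hammingDist, Finset.card_filter]

theorem hammingDist_add_hammingDist_eq_iff {a m b : ∀ i, β i} :
    hammingDist a m + hammingDist m b = hammingDist a b ↔ ∀ i, m i = a i ∨ m i = b i := by
  simp only [hammingDist_eq_sum, ← Finset.sum_add_distrib]
  rw [eq_comm, Finset.sum_eq_sum_iff_of_le fun i _ => by split_ifs <;> simp_all]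
  refine forall_congr' fun i => ?_
  by_cases hma : m i = a i <;> by_cases hmb : m i = b i <;> by_cases hab : a i = b i <;>
    simp_all [eq_comm (a := m i)]

theorem hammingDist_update_of_ne [DecidableEq ι] {a : ∀ i, β i} {i : ι} {z : β i}
    (h : a i ≠ z) : hammingDist a (Function.update a i z) = 1 := by
  rw [hammingDist, Finset.card_eq_one]
  refine ⟨i, Finset.ext fun j => ?_⟩
  by_cases hj : j = i
  · subst hj; simpa using h
  · simp [hj]

end Hamming

section ExtendedHypercube

variable {n : ℕ}

theorem extHypercube_adj_inr_iff (i : Fin n) (z : (Fin n → Bool) ⊕ Fin n) :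
    (extHypercube n).Adj (Sum.inr i) z ↔ z = Sum.inl (unitVec n i) := by
  cases z with
  | inl a => exact Sum.inl_injective.eq_iff.symm
  | inr j => exact iff_of_false id Sum.inr_ne_inl

theorem exists_walk_inl_length_eq_hammingDist (a b : Fin n → Bool) :
    ∃ p : (extHypercube n).Walk (Sum.inl a) (Sum.inl b), p.length = hammingDist a b := by
  induction h : hammingDist a b generalizing a with
  | zero =>
    obtain rfl := hammingDist_eq_zero.1 h
    exact ⟨Walk.nil, rfl⟩
  | succ k ih =>
    obtain ⟨j, hj⟩ : ∃ j, a j ≠ b j := Function.ne_iff.1 (hammingDist_pos.1 (by omega))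
    set a' := Function.update a j (b j)
    have hadj : hammingDist a a' = 1 := hammingDist_update_of_ne hj
    have hbetween : hammingDist a a' + hammingDist a' b = hammingDist a b :=
      hammingDist_add_hammingDist_eq_iff.2 fun t => by
        by_cases ht : t = j
        · subst ht; simp [a']
        · simp [a', ht]
    obtain ⟨p, hp⟩ := ih a' (by omega)
    exact ⟨Walk.cons (show (extHypercube n).Adj (Sum.inl a) (Sum.inl a') from hadj) p,
      by simp [hp]⟩

def cubeProj (n : ℕ) : (Fin n → Bool) ⊕ Fin n → (Fin n → Bool)
  | Sum.inl a => a
  | Sum.inr i => unitVec n i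

theorem hammingDist_cubeProj_le_of_adj {u v : (Fin n → Bool) ⊕ Fin n}
    (h : (extHypercube n).Adj u v) : hammingDist (cubeProj n u) (cubeProj n v) ≤ 1 := by
  match u, v, h with
  | Sum.inl _, Sum.inl _, h => exact h.le
  | Sum.inl _, Sum.inr _, h => simp [cubeProj, show _ = unitVec n _ from h]
  | Sum.inr _, Sum.inl _, h => simp [cubeProj, show _ = unitVec n _ from h]

theorem hammingDist_cubeProj_le_length {u v : (Fin n → Bool) ⊕ Fin n}
    (p : (extHypercube n).Walk u v) : hammingDist (cubeProj n u) (cubeProj n v) ≤ p.length := by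
  induction p with
  | nil => simp
  | @cons x y z h p ih =>
    rw [Walk.length_cons]
    linarith [hammingDist_triangle (cubeProj n x) (cubeProj n y) (cubeProj n z),
      hammingDist_cubeProj_le_of_adj h]

theorem extHypercube_connected : (extHypercube n).Connected := by
  have reach_inl : ∀ u, (extHypercube n).Reachable u (Sum.inl (cubeProj n u))
    | Sum.inl _ => Reachable.refl _
    | Sum.inr i => Adj.reachable ((extHypercube_adj_inr_iff i _).2 rfl)
  refine (connected_iff _).2 ⟨fun u v => ?_, ⟨qRoot n⟩⟩
  obtain ⟨p, -⟩ := exists_walk_inl_length_eq_hammingDist (cubeProj n u) (cubeProj n v)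
  exact (reach_inl u).trans (p.reachable.trans (reach_inl v).symm)

theorem extHypercube_dist_inl (a b : Fin n → Bool) :
    (extHypercube n).dist (Sum.inl a) (Sum.inl b) = hammingDist a b := by
  obtain ⟨p, hp⟩ := exists_walk_inl_length_eq_hammingDist a b
  obtain ⟨q, hq⟩ := (extHypercube_connected (Sum.inl a) (Sum.inl b)).exists_walk_length_eq_dist
  exact le_antisymm (hp ▸ dist_le p) (hq ▸ hammingDist_cubeProj_le_length q)

def majority (x y z : Bool) : Bool := (x && y) || (y && z) || (z && x)

theorem extHypercube_isMedianVtx_inl_iff (a b c : Fin n → Bool) (m : (Fin n → Bool) ⊕ Fin n) :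
    IsMedianVtx (extHypercube n) (Sum.inl a) (Sum.inl b) (Sum.inl c) m ↔
      m = Sum.inl (fun t => majority (a t) (b t) (c t)) := by
  cases m with
  | inr i =>
    exact iff_of_false (fun h => not_between_pendant extHypercube_connected
      (extHypercube_adj_inr_iff i) Sum.inl_ne_inr Sum.inl_ne_inr h.1) Sum.inr_ne_inl
  | inl x =>
    simp only [IsMedianVtx, extHypercube_dist_inl, hammingDist_add_hammingDist_eq_iff,
      Sum.inl.injEq, funext_iff, ← forall_and]
    refine forall_congr' fun t => ?_
    cases a t <;> cases b t <;> cases c t <;> cases x t <;> decide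

theorem extHypercube_existsUnique_isMedianVtx (u v w : (Fin n → Bool) ⊕ Fin n) :
    ∃! m, IsMedianVtx (extHypercube n) u v w m := by
  have of_inl : ∀ u v w : (Fin n → Bool) ⊕ Fin n,
      (∀ a, ∃! m, IsMedianVtx (extHypercube n) (Sum.inl a) v w m) →
        ∃! m, IsMedianVtx (extHypercube n) u v w m
    | Sum.inl a, _, _, h => h a
    | Sum.inr i, _, _, h => existsUnique_isMedianVtx_pendant extHypercube_connected
        (extHypercube_adj_inr_iff i) (h _)
  have rotate : ∀ u v w : (Fin n → Bool) ⊕ Fin n, (∃! m, IsMedianVtx (extHypercube n) v w u m) →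
      ∃! m, IsMedianVtx (extHypercube n) u v w m := fun u v w =>
    (existsUnique_congr fun _ => isMedianVtx_rotate).2
  refine of_inl _ _ _ fun a => rotate _ _ _ <| of_inl _ _ _ fun b => rotate _ _ _ <|
    of_inl _ _ _ fun c => rotate _ _ _ ?_
  exact ⟨_, (extHypercube_isMedianVtx_inl_iff _ _ _ _).2 rfl,
    fun _ => (extHypercube_isMedianVtx_inl_iff _ _ _ _).1⟩

theorem extHypercube_isMedianVtx_root_leaves_iff {i j : Fin n} (hij : i ≠ j)
    (m : (Fin n → Bool) ⊕ Fin n) :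
    IsMedianVtx (extHypercube n) (qRoot n) (Sum.inr i) (Sum.inr j) m ↔
      m = Sum.inl (fun t => decide (t ∈ ({i, j} : Finset (Fin n)))) := by
  have hG := extHypercube_connected (n := n)
  rw [qRoot, isMedianVtx_rotate, isMedianVtx_pendant_iff hG (extHypercube_adj_inr_iff i)
      (Sum.inr_injective.ne hij.symm) Sum.inl_ne_inr, isMedianVtx_rotate,
    isMedianVtx_pendant_iff hG (extHypercube_adj_inr_iff j) Sum.inl_ne_inr Sum.inl_ne_inr,
    extHypercube_isMedianVtx_inl_iff]
  congr! 3 with t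
  by_cases hi : t = i <;> by_cases hj : t = j <;> simp [unitVec, majority, hi, hj]

end ExtendedHypercube

theorem stmt_3_general (n : ℕ) :
    IsMedianGraph (extHypercube n) ∧
    ∀ i j k l : Fin n, i ≠ j → k ≠ l →
      ({i, j} : Finset (Fin n)) ≠ ({k, l} : Finset (Fin n)) →
      ∀ m m' : (Fin n → Bool) ⊕ Fin n,
        IsMedianVtx (extHypercube n) (qRoot n) (Sum.inr i) (Sum.inr j) m →
        IsMedianVtx (extHypercube n) (qRoot n) (Sum.inr k) (Sum.inr l) m' →
        m ≠ m' := by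
  refine ⟨⟨extHypercube_connected, extHypercube_existsUnique_isMedianVtx⟩, ?_⟩
  intro i j k l hij hkl hne m m' hm hm' hmm'
  rw [extHypercube_isMedianVtx_root_leaves_iff hij] at hm
  rw [extHypercube_isMedianVtx_root_leaves_iff hkl] at hm'
  have hind := Sum.inl_injective (hm.symm.trans (hmm'.trans hm'))
  exact hne (Finset.ext fun t => decide_eq_decide.1 (congrFun hind t))

/-- For every `n ≥ 2` the extended hypercube `Q^ext_n` is a median graph,
and the medians `med(ρ, x_i, x_j)` and `med(ρ, x_k, x_l)` are distinct whenever
`i ≠ j`, `k ≠ l` and `{i,j} ≠ {k,l}`. -/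
theorem stmt_3 (n : ℕ) (hn : 2 ≤ n) :
    IsMedianGraph (extHypercube n) ∧
    ∀ i j k l : Fin n, i ≠ j → k ≠ l →
      ({i, j} : Finset (Fin n)) ≠ ({k, l} : Finset (Fin n)) →
      ∀ m m' : (Fin n → Bool) ⊕ Fin n,
        IsMedianVtx (extHypercube n) (qRoot n) (Sum.inr i) (Sum.inr j) m →
        IsMedianVtx (extHypercube n) (qRoot n) (Sum.inr k) (Sum.inr l) m' →
        m ≠ m' :=
  stmt_3_general n
end

section
/- For every finite set X with |X| ≥ 2 and every symmetric map δ : X×X → Υ, there is a labeling t of the median vertices of the extended hypercube Q^ext_{|X|} (with its leaves identified with the elements of X and root ρ) such that δ(x,y) = t(med(ρ,x,y)) for all distinct x,y ∈ X; that is, δ is explained by a labeled extended hypercube. -/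
/-!
For leaves `x_i ≠ x_j` of `Q^ext_n`, the median with the root is the cube vertex with support
`{i, j}`. Distances between cube vertices are Hamming distances (the projection of the leaf
`x_i` to `e_i` is `1`-Lipschitz), and a leaf adds one to the distance from its unique neighbour,
so this vertex lies at distance `n - 2` from the root and `2` from `x_i` and `x_j`, which are at
distance `n` from the root and `4` from each other. Distinct unordered pairs give distinct
medians, so `δ`, which factors through `Sym2 X`, can be transported to these vertices.
-/

open Finset Function

theorem Finset.card_symmDiff_of_subset {α : Type*} [DecidableEq α] {S T : Finset α} (h : S ⊆ T) :
    #(symmDiff S T) = #T - #S := by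
  rw [symmDiff_of_le h, card_sdiff_of_subset h]

theorem Sym2.toFinset_injective {α : Type*} [DecidableEq α] :
    Injective (Sym2.toFinset : Sym2 α → Finset α) := fun s t h =>
  Sym2.ext fun k => by simpa using congrArg (k ∈ ·) h

namespace SimpleGraph

variable {V : Type*} {G : SimpleGraph V} {ι β : Type*} [Fintype ι] [DecidableEq β]

theorem hammingDist_le_length (f : V → ι → β)
    (hf : ∀ u v, G.Adj u v → hammingDist (f u) (f v) ≤ 1) {u v : V} (p : G.Walk u v) :
    hammingDist (f u) (f v) ≤ p.length := by
  induction p with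
  | nil => simp
  | @cons u w v h q ih =>
    calc hammingDist (f u) (f v) ≤ hammingDist (f u) (f w) + hammingDist (f w) (f v) :=
          hammingDist_triangle _ _ _
      _ ≤ 1 + q.length := add_le_add (hf u w h) ih
      _ = (Walk.cons h q).length := by rw [Walk.length_cons, add_comm]

variable [DecidableEq ι]

theorem hammingDist_update_self {a : ι → β} {i : ι} {c : β} (hc : a i ≠ c) :
    hammingDist a (update a i c) = 1 := by
  have : ({j | a j ≠ update a i c j} : Finset ι) = {i} := by
    ext j
    by_cases hj : j = i <;> simp [update, hj, hc]
  rw [hammingDist, this, card_singleton]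

theorem hammingDist_update_of_ne {a b : ι → β} {i : ι} (hi : a i ≠ b i) :
    hammingDist (update a i (b i)) b = hammingDist a b - 1 := by
  have : ({j | update a i (b i) j ≠ b j} : Finset ι) = ({j | a j ≠ b j} : Finset ι).erase i := by
    ext j
    by_cases hj : j = i <;> simp [update, hj]
  rw [hammingDist, hammingDist, this, card_erase_of_mem (by simpa using hi)]

theorem exists_walk_length_eq_hammingDist (f : (ι → β) → V)
    (hf : ∀ a b, hammingDist a b = 1 → G.Adj (f a) (f b)) (a b : ι → β) :
    ∃ p : G.Walk (f a) (f b), p.length = hammingDist a b := by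
  induction hab : hammingDist a b generalizing a with
  | zero =>
    obtain rfl := eq_of_hammingDist_eq_zero hab
    exact ⟨.nil, rfl⟩
  | succ k ih =>
    obtain ⟨i, hi⟩ : ∃ i, a i ≠ b i := by
      by_contra! h
      simp [funext h] at hab
    obtain ⟨q, hq⟩ := ih (update a i (b i)) (by rw [hammingDist_update_of_ne hi, hab]; rfl)
    exact ⟨.cons (hf _ _ (hammingDist_update_self hi)) q, by rw [Walk.length_cons, hq]⟩

theorem dist_eq_hammingDist (f : (ι → β) → V) (g : V → ι → β)
    (hgf : LeftInverse g f) (hf : ∀ a b, hammingDist a b = 1 → G.Adj (f a) (f b))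
    (hg : ∀ u v, G.Adj u v → hammingDist (g u) (g v) ≤ 1) (a b : ι → β) :
    G.dist (f a) (f b) = hammingDist a b := by
  obtain ⟨p, hp⟩ := exists_walk_length_eq_hammingDist f hf a b
  obtain ⟨q, hq⟩ := Reachable.exists_walk_length_eq_dist ⟨p⟩
  refine le_antisymm (hp ▸ dist_le p) ?_
  simpa only [hgf a, hgf b, hq] using hammingDist_le_length g hg q

theorem dist_eq_dist_add_one_of_adj_iff {v w z : V} (hv : ∀ u, G.Adj v u ↔ u = w)
    (hz : z ≠ v) (hwz : G.Reachable w z) : G.dist v z = G.dist w z + 1 := by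
  have hvw : G.Adj v w := (hv w).2 rfl
  obtain ⟨p, hp⟩ := hwz.exists_walk_length_eq_dist
  obtain ⟨q, hq⟩ := (hvw.reachable.trans hwz).exists_walk_length_eq_dist
  refine le_antisymm (hp ▸ dist_le (.cons hvw p)) ?_
  cases q with
  | nil => exact absurd rfl hz
  | cons h q' =>
    obtain rfl := (hv _).1 h
    rw [← hq, Walk.length_cons]
    exact Nat.succ_le_succ (dist_le q')

end SimpleGraph

def cubeVertex {n : ℕ} (S : Finset (Fin n)) : Fin n → Bool := fun k => decide (k ∈ S)

theorem cubeVertex_injective {n : ℕ} : Injective (cubeVertex (n := n)) := fun S T h => by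
  ext k
  simpa [cubeVertex] using congrFun h k

theorem hammingDist_cubeVertex {n : ℕ} (S T : Finset (Fin n)) :
    hammingDist (cubeVertex S) (cubeVertex T) = #(symmDiff S T) := by
  unfold hammingDist
  congr 1
  ext k
  simp only [cubeVertex, mem_filter, mem_univ, true_and, mem_symmDiff, ne_eq, decide_eq_decide]
  tauto

theorem unitVec_eq_cubeVertex (n : ℕ) (i : Fin n) : unitVec n i = cubeVertex {i} := by
  ext k
  simp [unitVec, cubeVertex]

theorem qRoot_eq_cubeVertex (n : ℕ) : qRoot n = .inl (cubeVertex univ) := by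
  unfold qRoot cubeVertex
  simp

namespace extHypercube

open SimpleGraph

variable {n : ℕ}

def proj : (Fin n → Bool) ⊕ Fin n → Fin n → Bool
  | .inl a => a
  | .inr i => unitVec n i

theorem hammingDist_proj_le_one {u v : (Fin n → Bool) ⊕ Fin n} (h : (extHypercube n).Adj u v) :
    hammingDist (proj u) (proj v) ≤ 1 := by
  match u, v, h with
  | .inl _, .inl _, h => exact h.le
  | .inl _, .inr _, rfl => simp [proj]
  | .inr _, .inl _, rfl => simp [proj]

theorem dist_inl_inl (a b : Fin n → Bool) :
    (extHypercube n).dist (.inl a) (.inl b) = hammingDist a b :=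
  dist_eq_hammingDist Sum.inl proj (fun _ => rfl) (fun _ _ h => h)
    (fun _ _ => hammingDist_proj_le_one) a b

theorem adj_inr_iff (i : Fin n) (u : (Fin n → Bool) ⊕ Fin n) :
    (extHypercube n).Adj (.inr i) u ↔ u = .inl (unitVec n i) := by
  cases u with
  | inl a => exact ⟨fun h => congrArg Sum.inl h, fun h => Sum.inl_injective h⟩
  | inr j => exact ⟨False.elim, Sum.inl_ne_inr.elim ∘ Eq.symm⟩

theorem reachable_inl (a : Fin n → Bool) (v : (Fin n → Bool) ⊕ Fin n) :
    (extHypercube n).Reachable (.inl a) v := by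
  have hinl (b : Fin n → Bool) : (extHypercube n).Reachable (.inl a) (.inl b) :=
    (exists_walk_length_eq_hammingDist Sum.inl (fun _ _ h => h) a b).elim fun p _ => ⟨p⟩
  cases v with
  | inl b => exact hinl b
  | inr i => exact (hinl _).trans ((adj_inr_iff i _).2 rfl).symm.reachable

theorem dist_inr (i : Fin n) {v : (Fin n → Bool) ⊕ Fin n} (hv : v ≠ .inr i) :
    (extHypercube n).dist (.inr i) v = (extHypercube n).dist (.inl (unitVec n i)) v + 1 :=
  dist_eq_dist_add_one_of_adj_iff (adj_inr_iff i) hv (reachable_inl _ v)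

theorem dist_cubeVertex_inr (S : Finset (Fin n)) (k : Fin n) :
    (extHypercube n).dist (.inl (cubeVertex S)) (.inr k) = #(symmDiff {k} S) + 1 := by
  rw [dist_comm, dist_inr k Sum.inl_ne_inr, unitVec_eq_cubeVertex, dist_inl_inl,
    hammingDist_cubeVertex]

theorem isMedianVtx_qRoot_inr_inr {i j : Fin n} (hij : i ≠ j) :
    IsMedianVtx (extHypercube n) (qRoot n) (.inr i) (.inr j) (.inl (cubeVertex {i, j})) := by
  have hn : 2 ≤ n := by simpa [card_pair hij] using card_le_univ ({i, j} : Finset (Fin n))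
  have d_root_med : (extHypercube n).dist (qRoot n) (.inl (cubeVertex {i, j})) = n - 2 := by
    rw [qRoot_eq_cubeVertex, dist_inl_inl, hammingDist_cubeVertex, symmDiff_comm,
      card_symmDiff_of_subset (subset_univ _), card_univ, Fintype.card_fin, card_pair hij]
  have d_med_leaf {k : Fin n} (hk : k ∈ ({i, j} : Finset (Fin n))) :
      (extHypercube n).dist (.inl (cubeVertex {i, j})) (.inr k) = 2 := by
    rw [dist_cubeVertex_inr, card_symmDiff_of_subset (singleton_subset_iff.2 hk),
      card_pair hij, card_singleton]
  have d_root_leaf (k : Fin n) : (extHypercube n).dist (qRoot n) (.inr k) = n := by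
    rw [qRoot_eq_cubeVertex, dist_cubeVertex_inr,
      card_symmDiff_of_subset (subset_univ _), card_univ, Fintype.card_fin, card_singleton]
    omega
  have d_leaf_leaf : (extHypercube n).dist (.inr i) (.inr j) = 4 := by
    rw [dist_inr i (Sum.inr_injective.ne hij.symm), unitVec_eq_cubeVertex,
      dist_cubeVertex_inr, (disjoint_singleton.2 hij.symm).symmDiff_eq_sup,
      sup_eq_union, ← insert_eq, card_pair hij.symm]
  refine ⟨?_, ?_, ?_⟩
  · rw [d_root_med, d_med_leaf (by simp), d_root_leaf]
    omega
  · rw [dist_comm, d_med_leaf (by simp), d_med_leaf (by simp), d_leaf_leaf]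
  · rw [d_root_med, d_med_leaf (by simp), d_root_leaf]
    omega

end extHypercube

/-- Every symmetric map `δ` on a finite set `X` with `|X| ≥ 2` can be
explained by a labeled extended hypercube `Q^ext_{|X|}`: identifying the leaves of
`Q^ext_{|X|}` with the elements of `X` (via a bijection `e : X ≃ Fin |X|`), there is a
labeling `t` such that `δ x y = t (med(ρ, x, y))` for all distinct `x, y ∈ X`. -/
theorem stmt_4 {X Υ : Type*} [Fintype X] (h2 : 2 ≤ Fintype.card X)
    (δ : X → X → Υ) (hsym : ∀ x y : X, x ≠ y → δ x y = δ y x)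
    (e : X ≃ Fin (Fintype.card X)) :
    ∃ t : ((Fin (Fintype.card X) → Bool) ⊕ Fin (Fintype.card X)) → Υ,
      ∀ x y : X, x ≠ y →
        ∃ m, IsMedianVtx (extHypercube (Fintype.card X)) (qRoot (Fintype.card X))
              (Sum.inr (e x)) (Sum.inr (e y)) m ∧
          t m = δ x y := by
  obtain ⟨x₀⟩ : Nonempty X := Fintype.card_pos_iff.mp (by omega)
  have hδ (x y : X) : δ x y = δ y x := by
    obtain rfl | hxy := eq_or_ne x y
    exacts [rfl, hsym x y hxy]
  let median (s : Sym2 X) : (Fin (Fintype.card X) → Bool) ⊕ Fin (Fintype.card X) :=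
    .inl (cubeVertex (s.map e).toFinset)
  have median_injective : Injective median :=
    Sum.inl_injective.comp <| cubeVertex_injective.comp <|
      Sym2.toFinset_injective.comp (Sym2.map.injective e.injective)
  refine ⟨extend median (Sym2.lift ⟨δ, hδ⟩) fun _ => δ x₀ x₀, fun x y hxy =>
    ⟨median s(x, y), ?_, ?_⟩⟩
  · simpa [median, Sym2.toFinset_mk_eq] using extHypercube.isMedianVtx_qRoot_inr_inr (e.injective.ne hxy)
  · rw [median_injective.extend_apply, Sym2.lift_mk]
end

section
/- For every n ≥ 2, the half-grid H_n is a median graph. -/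
/-- Adjacency of the infinite grid on `ℕ × ℕ`: two pairs are adjacent iff they agree
in one coordinate and differ by exactly one in the other (this is the adjacency of a
Cartesian product of paths). -/
def gridAdj (p q : ℕ × ℕ) : Prop :=
  (p.1 = q.1 ∧ (p.2 + 1 = q.2 ∨ q.2 + 1 = p.2)) ∨
  (p.2 = q.2 ∧ (p.1 + 1 = q.1 ∨ q.1 + 1 = p.1))

/-- The grid graph on `ℕ × ℕ`. -/
def gridGraph : SimpleGraph (ℕ × ℕ) where
  Adj := gridAdj
  symm := by
    constructor
    intro p q h
    simp only [gridAdj] at h ⊢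
    omega
  loopless := by
    constructor
    intro p h
    simp only [gridAdj] at h
    omega

/-- The vertex set `{1, …, n} × {1, …, n}` of `P_n □ P_n` (1-indexed). -/
def gridVert (n : ℕ) : Set (ℕ × ℕ) := {p | 1 ≤ p.1 ∧ p.1 ≤ n ∧ 1 ≤ p.2 ∧ p.2 ≤ n}

/-- The vertex set of the half-grid `H_n`: the vertices `(i,j)` of `P_n □ P_n` with
either `i = 1` and `1 ≤ j ≤ n`, or `2 ≤ i ≤ n` and `i - 1 ≤ j ≤ n`; equivalently,
the vertices with `i ≤ j + 1`. -/
def halfVert (n : ℕ) : Set (ℕ × ℕ) := {p | p ∈ gridVert n ∧ p.1 ≤ p.2 + 1}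

/-- The full grid `P_n □ P_n` (1-indexed), as an induced subgraph of `gridGraph`. -/
def fullGrid (n : ℕ) : SimpleGraph (gridVert n) := gridGraph.induce (gridVert n)

/-- The half-grid `H_n`, the subgraph of `P_n □ P_n` induced by `halfVert n`. -/
def halfGrid (n : ℕ) : SimpleGraph (halfVert n) := gridGraph.induce (halfVert n)

/-! The graph distance of `H_n` is the `ℓ¹` distance: between two vertices there is always a
monotone lattice path staying in the region `i ≤ j + 1`. For the `ℓ¹` distance, a median of
`u, v, w` lies coordinatewise between each two of them, so it must be the coordinatewise median;
and that point lies in `H_n` because the median of three numbers is monotone and commutes with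
adding `1`. -/

open SimpleGraph

def l1Dist (p q : ℕ × ℕ) : ℕ := Nat.dist p.1 q.1 + Nat.dist p.2 q.2

def med3 (a b c : ℕ) : ℕ := max (min a b) (min (max a b) c)

lemma eq_med3_iff (a b c m : ℕ) :
    m = med3 a b c ↔ Nat.dist a m + Nat.dist m b = Nat.dist a b ∧
      Nat.dist b m + Nat.dist m c = Nat.dist b c ∧ Nat.dist a m + Nat.dist m c = Nat.dist a c := by
  simp only [Nat.dist, med3]
  omega

lemma med3_le_med3_add_one {a₁ b₁ c₁ a₂ b₂ c₂ : ℕ} (ha : a₁ ≤ a₂ + 1) (hb : b₁ ≤ b₂ + 1)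
    (hc : c₁ ≤ c₂ + 1) : med3 a₁ b₁ c₁ ≤ med3 a₂ b₂ c₂ + 1 := by
  simp only [med3]
  omega

lemma l1Dist_add_l1Dist_eq_iff (p q m : ℕ × ℕ) :
    l1Dist p m + l1Dist m q = l1Dist p q ↔
      Nat.dist p.1 m.1 + Nat.dist m.1 q.1 = Nat.dist p.1 q.1 ∧
        Nat.dist p.2 m.2 + Nat.dist m.2 q.2 = Nat.dist p.2 q.2 := by
  simp only [l1Dist, Nat.dist]
  omega

lemma mem_halfVert {n : ℕ} {p : ℕ × ℕ} :
    p ∈ halfVert n ↔ 1 ≤ p.1 ∧ p.1 ≤ n ∧ 1 ≤ p.2 ∧ p.2 ≤ n ∧ p.1 ≤ p.2 + 1 := by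
  simp only [halfVert, gridVert, Set.mem_ofPred_eq, and_assoc]

lemma l1Dist_le_length {s : Set (ℕ × ℕ)} {a b : s} (w : (gridGraph.induce s).Walk a b) :
    l1Dist a b ≤ w.length := by
  induction w with
  | nil => simp [l1Dist]
  | @cons u v _ h _ ih =>
    have huv : gridAdj u v := h
    rw [Walk.length_cons]
    simp only [gridAdj, l1Dist, Nat.dist] at huv ih ⊢
    omega

/-- Increasing the first coordinate is postponed until the second one is in place, so that
`i ≤ j + 1` is preserved. -/
lemma exists_adj_l1Dist_add_one_eq {n : ℕ} {p q : ℕ × ℕ} (hp : p ∈ halfVert n)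
    (hq : q ∈ halfVert n) (hpq : p ≠ q) :
    ∃ r ∈ halfVert n, gridAdj p r ∧ l1Dist r q + 1 = l1Dist p q := by
  obtain ⟨x, y⟩ := p
  obtain ⟨c, d⟩ := q
  rw [mem_halfVert] at hp hq
  simp only [ne_eq, Prod.mk.injEq] at hp hq hpq
  simp only [gridAdj, l1Dist, Nat.dist]
  by_cases hxc : c < x
  · exact ⟨(x - 1, y), mem_halfVert.mpr (by omega), by omega⟩
  by_cases hyd : y < d
  · exact ⟨(x, y + 1), mem_halfVert.mpr (by omega), by omega⟩
  by_cases hcx : x < c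
  · exact ⟨(x + 1, y), mem_halfVert.mpr (by omega), by omega⟩
  · exact ⟨(x, y - 1), mem_halfVert.mpr (by omega), by omega⟩

lemma exists_walk_length_eq_l1Dist {n : ℕ} (a b : halfVert n) :
    ∃ w : (halfGrid n).Walk a b, w.length = l1Dist a b := by
  generalize hk : l1Dist a b = k
  induction k generalizing a with
  | zero =>
    obtain rfl : a = b := by
      simp only [l1Dist, Nat.dist] at hk
      ext <;> omega
    exact ⟨Walk.nil, rfl⟩
  | succ k ih =>
    have hab : a.1 ≠ b.1 := fun h => by simp [h, l1Dist] at hk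
    obtain ⟨r, hr, hadj, hrb⟩ := exists_adj_l1Dist_add_one_eq a.2 b.2 hab
    obtain ⟨w, hw⟩ := ih ⟨r, hr⟩ (show l1Dist r b = k by omega)
    exact ⟨Walk.cons (show (halfGrid n).Adj a ⟨r, hr⟩ from hadj) w, by simp [hw]⟩

lemma halfGrid_dist {n : ℕ} (a b : halfVert n) : (halfGrid n).dist a b = l1Dist a b := by
  obtain ⟨w, hw⟩ := exists_walk_length_eq_l1Dist a b
  obtain ⟨v, hv⟩ := Reachable.exists_walk_length_eq_dist ⟨w⟩
  exact le_antisymm (hw ▸ dist_le w) (hv ▸ l1Dist_le_length v)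

lemma halfGrid_connected {n : ℕ} (hn : 1 ≤ n) : (halfGrid n).Connected :=
  connected_iff _ |>.mpr ⟨fun a b => ⟨(exists_walk_length_eq_l1Dist a b).choose⟩,
    ⟨⟨(1, 1), mem_halfVert.mpr (by omega)⟩⟩⟩

def halfGridMedian {n : ℕ} (u v w : halfVert n) : halfVert n :=
  ⟨(med3 u.1.1 v.1.1 w.1.1, med3 u.1.2 v.1.2 w.1.2), by
    obtain ⟨⟨u₁, u₂⟩, hu⟩ := u
    obtain ⟨⟨v₁, v₂⟩, hv⟩ := v
    obtain ⟨⟨w₁, w₂⟩, hw⟩ := w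
    rw [mem_halfVert] at hu hv hw ⊢
    have := med3_le_med3_add_one hu.2.2.2.2 hv.2.2.2.2 hw.2.2.2.2
    simp only [med3] at this ⊢
    omega⟩

lemma isMedianVtx_halfGrid_iff {n : ℕ} (u v w m : halfVert n) :
    IsMedianVtx (halfGrid n) u v w m ↔ m = halfGridMedian u v w := by
  simp only [IsMedianVtx, halfGrid_dist, l1Dist_add_l1Dist_eq_iff, halfGridMedian,
    Subtype.ext_iff, Prod.ext_iff, eq_med3_iff]
  tauto

/-- For every `n ≥ 2`, the half-grid `H_n` is a median graph. -/
theorem stmt_5 (n : ℕ) (hn : 2 ≤ n) : IsMedianGraph (halfGrid n) :=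
  ⟨halfGrid_connected (by omega), fun u v w =>
    ⟨halfGridMedian u v w, (isMedianVtx_halfGrid_iff u v w _).mpr rfl,
      fun m hm => (isMedianVtx_halfGrid_iff u v w m).mp hm⟩⟩
end

section
/- Let n ≥ 2, let ρ = (1,n) in the half-grid H_n, and for 1 ≤ ℓ ≤ n+1 define v_1 = (1,1), v_{n+1} = (n,n), and v_ℓ = (ℓ,ℓ−1) for 2 ≤ ℓ ≤ n. Then for all 1 ≤ i < j ≤ n+1 there is a shortest path in H_n from ρ to v_i containing the vertex (i,j−1), and a shortest path in H_n from ρ to v_j containing (i,j−1); moreover the distances from ρ to v_i and to v_j in H_n equal the corresponding distances in P_n □ P_n. -/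
/-- The distinguished vertices `v_1 = (1,1)`, `v_{n+1} = (n,n)` and `v_ℓ = (ℓ, ℓ-1)`
for `2 ≤ ℓ ≤ n` of the half-grid `H_n`. -/
def hgVert (n ℓ : ℕ) : ℕ × ℕ :=
  if ℓ = n + 1 then (n, n) else if ℓ = 1 then (1, 1) else (ℓ, ℓ - 1)

open SimpleGraph

def l1dist (p q : ℕ × ℕ) : ℕ := p.1.dist q.1 + p.2.dist q.2

lemma gridAdj_l1dist_eq_one {p q : ℕ × ℕ} (h : gridAdj p q) : l1dist p q = 1 := by
  simp only [gridAdj] at h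
  simp only [l1dist, Nat.dist]
  omega

lemma l1dist_le_length {S : Set (ℕ × ℕ)} {p q : S} (w : (gridGraph.induce S).Walk p q) :
    l1dist p q ≤ w.length := by
  induction w with
  | nil => simp [l1dist]
  | @cons u v _ h _ ih =>
    have hstep := gridAdj_l1dist_eq_one (show gridAdj u v from h)
    simp only [l1dist, Nat.dist, Walk.length_cons] at hstep ih ⊢
    omega

lemma l1dist_add_l1dist_of_mem_uIcc {p m q : ℕ × ℕ} (h₁ : m.1 ∈ Set.uIcc p.1 q.1)
    (h₂ : m.2 ∈ Set.uIcc p.2 q.2) : l1dist p m + l1dist m q = l1dist p q := by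
  simp only [Set.mem_uIcc] at h₁ h₂
  simp only [l1dist, Nat.dist]
  omega

def AdmitsL1Steps (S : Set (ℕ × ℕ)) : Prop :=
  ∀ p ∈ S, ∀ q ∈ S, p ≠ q → ∃ p' ∈ S, gridAdj p p' ∧ l1dist p' q + 1 = l1dist p q

lemma AdmitsL1Steps.exists_walk_length_eq_l1dist {S : Set (ℕ × ℕ)} (hS : AdmitsL1Steps S)
    (p q : S) : ∃ w : (gridGraph.induce S).Walk p q, w.length = l1dist p q := by
  induction hN : l1dist p q generalizing p with
  | zero =>
    have hpq : p = q := by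
      simp only [l1dist, Nat.dist] at hN
      exact Subtype.ext (Prod.ext (by omega) (by omega))
    subst hpq
    exact ⟨Walk.nil, rfl⟩
  | succ N ih =>
    have hne : (p : ℕ × ℕ) ≠ q := fun h => by simp [h, l1dist] at hN
    obtain ⟨p', hp', hadj, hcloser⟩ := hS p p.2 q q.2 hne
    obtain ⟨w, hw⟩ := ih ⟨p', hp'⟩ (show l1dist p' q = N by omega)
    have hadj' : (gridGraph.induce S).Adj p ⟨p', hp'⟩ := hadj
    exact ⟨w.cons hadj', by simp [hw]⟩

lemma AdmitsL1Steps.dist_eq_l1dist {S : Set (ℕ × ℕ)} (hS : AdmitsL1Steps S) (p q : S) :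
    (gridGraph.induce S).dist p q = l1dist p q := by
  obtain ⟨w, hw⟩ := hS.exists_walk_length_eq_l1dist p q
  obtain ⟨w', hw'⟩ := Reachable.exists_walk_length_eq_dist ⟨w⟩
  exact le_antisymm (hw ▸ dist_le w) (hw' ▸ l1dist_le_length w')

lemma admitsL1Steps_gridVert (n : ℕ) : AdmitsL1Steps (gridVert n) := by
  rintro ⟨a, b⟩ hp ⟨c, d⟩ hq hne
  simp only [gridVert, Set.mem_ofPred_eq] at hp hq
  have hne' : a ≠ c ∨ b ≠ d := by
    by_contra! h
    exact hne (by rw [h.1, h.2])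
  rcases lt_trichotomy a c with h | rfl | h
  · exact ⟨(a + 1, b), by simp [gridVert]; omega, by simp [gridAdj],
      by simp [l1dist, Nat.dist]; omega⟩
  · rcases lt_or_gt_of_ne (hne'.resolve_left (by simp)) with h | h
    · exact ⟨(a, b + 1), by simp [gridVert]; omega, by simp [gridAdj],
        by simp [l1dist, Nat.dist]; omega⟩
    · exact ⟨(a, b - 1), by simp [gridVert]; omega, by simp [gridAdj]; omega,
        by simp [l1dist, Nat.dist]; omega⟩
  · exact ⟨(a - 1, b), by simp [gridVert]; omega, by simp [gridAdj]; omega,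
      by simp [l1dist, Nat.dist]; omega⟩

lemma admitsL1Steps_halfVert (n : ℕ) : AdmitsL1Steps (halfVert n) := by
  rintro ⟨a, b⟩ hp ⟨c, d⟩ hq hne
  simp only [halfVert, gridVert, Set.mem_ofPred_eq] at hp hq
  have hne' : a ≠ c ∨ b ≠ d := by
    by_contra! h
    exact hne (by rw [h.1, h.2])
  rcases lt_trichotomy a c with h | rfl | h
  · -- on the boundary `a = b + 1` move up first; there is room since `b < d`
    by_cases hab : a ≤ b
    · exact ⟨(a + 1, b), by simp [halfVert, gridVert]; omega, by simp [gridAdj],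
        by simp [l1dist, Nat.dist]; omega⟩
    · exact ⟨(a, b + 1), by simp [halfVert, gridVert]; omega, by simp [gridAdj],
        by simp [l1dist, Nat.dist]; omega⟩
  · rcases lt_or_gt_of_ne (hne'.resolve_left (by simp)) with h | h
    · exact ⟨(a, b + 1), by simp [halfVert, gridVert]; omega, by simp [gridAdj],
        by simp [l1dist, Nat.dist]; omega⟩
    · exact ⟨(a, b - 1), by simp [halfVert, gridVert]; omega, by simp [gridAdj]; omega,
        by simp [l1dist, Nat.dist]; omega⟩
  · exact ⟨(a - 1, b), by simp [halfVert, gridVert]; omega, by simp [gridAdj]; omega,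
      by simp [l1dist, Nat.dist]; omega⟩

theorem stmt_7_general (n i j : ℕ) (hij : i < j)
    (hρh : ((1, n) : ℕ × ℕ) ∈ halfVert n) (hρg : ((1, n) : ℕ × ℕ) ∈ gridVert n)
    (hih : hgVert n i ∈ halfVert n) (hjh : hgVert n j ∈ halfVert n)
    (hig : hgVert n i ∈ gridVert n) (hjg : hgVert n j ∈ gridVert n)
    (hw : ((i, j - 1) : ℕ × ℕ) ∈ halfVert n) :
    ((halfGrid n).dist ⟨(1, n), hρh⟩ ⟨(i, j - 1), hw⟩ +
        (halfGrid n).dist ⟨(i, j - 1), hw⟩ ⟨hgVert n i, hih⟩ =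
      (halfGrid n).dist ⟨(1, n), hρh⟩ ⟨hgVert n i, hih⟩) ∧
    ((halfGrid n).dist ⟨(1, n), hρh⟩ ⟨(i, j - 1), hw⟩ +
        (halfGrid n).dist ⟨(i, j - 1), hw⟩ ⟨hgVert n j, hjh⟩ =
      (halfGrid n).dist ⟨(1, n), hρh⟩ ⟨hgVert n j, hjh⟩) ∧
    (halfGrid n).dist ⟨(1, n), hρh⟩ ⟨hgVert n i, hih⟩ =
      (fullGrid n).dist ⟨(1, n), hρg⟩ ⟨hgVert n i, hig⟩ ∧
    (halfGrid n).dist ⟨(1, n), hρh⟩ ⟨hgVert n j, hjh⟩ =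
      (fullGrid n).dist ⟨(1, n), hρg⟩ ⟨hgVert n j, hjg⟩ := by
  simp only [halfGrid, fullGrid, (admitsL1Steps_halfVert n).dist_eq_l1dist,
    (admitsL1Steps_gridVert n).dist_eq_l1dist]
  simp only [halfVert, gridVert, Set.mem_ofPred_eq] at hw
  refine ⟨l1dist_add_l1dist_of_mem_uIcc ?_ ?_, l1dist_add_l1dist_of_mem_uIcc ?_ ?_,
    trivial, trivial⟩ <;> simp only [hgVert, Set.mem_uIcc] <;> split_ifs <;> omega

/-- For `n ≥ 2`, `ρ = (1,n)`, and `1 ≤ i < j ≤ n+1`, the vertex `(i, j-1)`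
lies on a shortest path in `H_n` from `ρ` to `v_i` and also on a shortest path in `H_n`
from `ρ` to `v_j` (expressed by additivity of distances through `(i, j-1)`); moreover
the distances in `H_n` from `ρ` to `v_i` and to `v_j` coincide with the corresponding
distances in `P_n □ P_n`. -/
theorem stmt_7 (n i j : ℕ) (hn : 2 ≤ n) (h1 : 1 ≤ i) (hij : i < j) (hj : j ≤ n + 1)
    (hρh : ((1, n) : ℕ × ℕ) ∈ halfVert n) (hρg : ((1, n) : ℕ × ℕ) ∈ gridVert n)
    (hih : hgVert n i ∈ halfVert n) (hjh : hgVert n j ∈ halfVert n)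
    (hig : hgVert n i ∈ gridVert n) (hjg : hgVert n j ∈ gridVert n)
    (hw : ((i, j - 1) : ℕ × ℕ) ∈ halfVert n) :
    ((halfGrid n).dist ⟨(1, n), hρh⟩ ⟨(i, j - 1), hw⟩ +
        (halfGrid n).dist ⟨(i, j - 1), hw⟩ ⟨hgVert n i, hih⟩ =
      (halfGrid n).dist ⟨(1, n), hρh⟩ ⟨hgVert n i, hih⟩) ∧
    ((halfGrid n).dist ⟨(1, n), hρh⟩ ⟨(i, j - 1), hw⟩ +
        (halfGrid n).dist ⟨(i, j - 1), hw⟩ ⟨hgVert n j, hjh⟩ =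
      (halfGrid n).dist ⟨(1, n), hρh⟩ ⟨hgVert n j, hjh⟩) ∧
    (halfGrid n).dist ⟨(1, n), hρh⟩ ⟨hgVert n i, hih⟩ =
      (fullGrid n).dist ⟨(1, n), hρg⟩ ⟨hgVert n i, hig⟩ ∧
    (halfGrid n).dist ⟨(1, n), hρh⟩ ⟨hgVert n j, hjh⟩ =
      (fullGrid n).dist ⟨(1, n), hρg⟩ ⟨hgVert n j, hjg⟩ :=
  stmt_7_general n i j hij hρh hρg hih hjh hig hjg hw
end

section
/- Let H^ext_{n+1} (n ≥ 2) be the extended half-grid with leaves L = {x_1,…,x_{n+1}} and root ρ. Then the assignment of unordered pairs of distinct leaves to medians, {x_i,x_j} ↦ med(ρ,x_i,x_j), is injective; that is, for every vertex w of the form med(ρ,x_i,x_j) with i < j, the pair (x_i,x_j) is uniquely determined by w. -/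
/-- Indices `1 ≤ ℓ ≤ n+1` of the leaves `x_1, …, x_{n+1}` of the extended half-grid. -/
abbrev leafIdx (n : ℕ) : Type := {ℓ : ℕ // 1 ≤ ℓ ∧ ℓ ≤ n + 1}

/-- The extended half-grid `H^ext_{n+1}`: the half-grid `H_n` together with `n+1`
leaves `x_1, …, x_{n+1}` (encoded as `Sum.inr ℓ`), where `x_1` is adjacent exactly to
`(1,1)`, `x_{n+1}` to `(n,n)`, and `x_ℓ` to `(ℓ, ℓ-1)` for `2 ≤ ℓ ≤ n`. -/
def extHalfGrid (n : ℕ) : SimpleGraph (↥(halfVert n) ⊕ leafIdx n) where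
  Adj x y :=
    match x, y with
    | Sum.inl a, Sum.inl b => gridAdj a.val b.val
    | Sum.inl a, Sum.inr ℓ => a.val = hgVert n ℓ.val
    | Sum.inr ℓ, Sum.inl a => a.val = hgVert n ℓ.val
    | Sum.inr _, Sum.inr _ => False
  symm := by
    constructor
    rintro (a | i) (b | j) h
    · show gridAdj b.val a.val
      have h' : gridAdj a.val b.val := h
      simp only [gridAdj] at h' ⊢
      omega
    · exact h
    · exact h
    · exact h
  loopless := by
    constructor
    rintro (a | i) h
    · have h' : gridAdj a.val a.val := h
      simp only [gridAdj] at h'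
      omega
    · exact h


/-! Shortest paths between vertices of the half-grid can be taken monotone inside it, so the
distance of `H^ext_{n+1}` is the `ℓ¹` distance of the grid, plus one for each leaf endpoint.
Hence a leaf never lies strictly between two other vertices on a geodesic, so
`med(ρ, x_i, x_j)` is a grid vertex, namely the coordinatewise median of `ρ = (1, n)`,
`v_i` and `v_j`. For `i < j` this is `(i, j - 1)`, from which `i` and `j` are read off. -/

open SimpleGraph Set
open scoped Interval

theorem SimpleGraph.dist_eq_of_adj_le_of_exists_walk {V : Type*} (G : SimpleGraph V)
    (d : V → V → ℕ) (hself : ∀ u, d u u = 0)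
    (hadj : ∀ {u u'} v, G.Adj u u' → d u v ≤ d u' v + 1)
    (hwalk : ∀ u v, ∃ p : G.Walk u v, p.length = d u v) (u v : V) :
    G.dist u v = d u v := by
  have hle : ∀ {u v} (p : G.Walk u v), d u v ≤ p.length := by
    intro u v p
    induction p with
    | nil => simp [hself]
    | @cons u' u'' w h p ih =>
      have := hadj w h
      rw [Walk.length_cons]
      omega
  obtain ⟨p, hp⟩ := hwalk u v
  obtain ⟨q, hq⟩ := p.reachable.exists_walk_length_eq_dist
  exact le_antisymm (hp ▸ dist_le p) (hq ▸ hle q)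

theorem Nat.dist_add_dist_eq_iff {a x b : ℕ} :
    a.dist x + x.dist b = a.dist b ↔ x ∈ [[a, b]] := by
  rw [mem_uIcc]
  unfold Nat.dist
  omega

namespace ExtHalfGrid

def gridDist (p q : ℕ × ℕ) : ℕ := p.1.dist q.1 + p.2.dist q.2

theorem gridDist_self (p : ℕ × ℕ) : gridDist p p = 0 := by
  simp [gridDist]

theorem gridDist_triangle (p q r : ℕ × ℕ) : gridDist p r ≤ gridDist p q + gridDist q r := by
  unfold gridDist Nat.dist
  omega

theorem gridDist_le_of_gridAdj {p q : ℕ × ℕ} (h : gridAdj p q) (r : ℕ × ℕ) :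
    gridDist p r ≤ gridDist q r + 1 := by
  unfold gridAdj at h
  unfold gridDist Nat.dist
  omega

theorem gridDist_add_gridDist_eq_iff {u p v : ℕ × ℕ} :
    gridDist u p + gridDist p v = gridDist u v ↔ p.1 ∈ [[u.1, v.1]] ∧ p.2 ∈ [[u.2, v.2]] := by
  rw [← Nat.dist_add_dist_eq_iff, ← Nat.dist_add_dist_eq_iff]
  unfold gridDist Nat.dist
  omega

theorem mem_halfVert_iff {n : ℕ} {p : ℕ × ℕ} :
    p ∈ halfVert n ↔ 1 ≤ p.1 ∧ p.1 ≤ n ∧ 1 ≤ p.2 ∧ p.2 ≤ n ∧ p.1 ≤ p.2 + 1 := by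
  simp only [halfVert, gridVert, mem_ofPred_eq, and_assoc]

theorem hgVert_eq {n ℓ : ℕ} (hn : 1 ≤ n) (hℓ : 1 ≤ ℓ) (hℓn : ℓ ≤ n + 1) :
    hgVert n ℓ = (min ℓ n, max (ℓ - 1) 1) := by
  unfold hgVert
  split_ifs <;> rw [Prod.mk.injEq] <;> omega

theorem hgVert_mem {n ℓ : ℕ} (hn : 1 ≤ n) (hℓ : 1 ≤ ℓ) (hℓn : ℓ ≤ n + 1) :
    hgVert n ℓ ∈ halfVert n := by
  rw [hgVert_eq hn hℓ hℓn, mem_halfVert_iff]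
  omega

/-- Raising the second coordinate or lowering the first never leaves the half-grid, so doing
those moves first keeps a monotone lattice path inside `halfVert n`. -/
theorem exists_gridAdj_gridDist_eq {n : ℕ} {p q : ℕ × ℕ} (hp : p ∈ halfVert n)
    (hq : q ∈ halfVert n) (hpq : p ≠ q) :
    ∃ p' ∈ halfVert n, gridAdj p p' ∧ gridDist p' q + 1 = gridDist p q := by
  rw [mem_halfVert_iff] at hp hq
  have hpq' : p.1 ≠ q.1 ∨ p.2 ≠ q.2 := by
    by_contra! h
    exact hpq (Prod.ext h.1 h.2)
  simp only [gridAdj, gridDist, Nat.dist, mem_halfVert_iff]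
  by_cases c₁ : p.2 < q.2
  · exact ⟨(p.1, p.2 + 1), by omega⟩
  by_cases c₂ : q.1 < p.1
  · exact ⟨(p.1 - 1, p.2), by omega⟩
  by_cases c₃ : q.2 < p.2
  · exact ⟨(p.1, p.2 - 1), by omega⟩
  · exact ⟨(p.1 + 1, p.2), by omega⟩

theorem exists_walk_inl_length_eq_gridDist {n : ℕ} (p q : halfVert n) :
    ∃ w : (extHalfGrid n).Walk (.inl p) (.inl q), w.length = gridDist p q := by
  induction h : gridDist p q generalizing p with
  | zero =>
    obtain rfl : p = q := by
      unfold gridDist Nat.dist at h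
      exact Subtype.ext (Prod.ext (by omega) (by omega))
    exact ⟨.nil, rfl⟩
  | succ m ih =>
    have hpq : p.1 ≠ q.1 := fun e => by simp [e, gridDist_self] at h
    obtain ⟨p', hp', hadj, hdist⟩ := exists_gridAdj_gridDist_eq p.2 q.2 hpq
    obtain ⟨w, hw⟩ := ih ⟨p', hp'⟩ (by dsimp only; omega)
    exact ⟨.cons (show (extHalfGrid n).Adj (.inl p) (.inl ⟨p', hp'⟩) from hadj) w, by simp [hw]⟩

def extDist (n : ℕ) : halfVert n ⊕ leafIdx n → halfVert n ⊕ leafIdx n → ℕ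
  | .inl a, .inl b => gridDist a b
  | .inl a, .inr ℓ => gridDist a (hgVert n ℓ) + 1
  | .inr ℓ, .inl b => gridDist (hgVert n ℓ) b + 1
  | .inr ℓ, .inr ℓ' => if ℓ = ℓ' then 0 else gridDist (hgVert n ℓ) (hgVert n ℓ') + 2

theorem extDist_le_of_adj {n : ℕ} {u u' : halfVert n ⊕ leafIdx n}
    (v : halfVert n ⊕ leafIdx n) (h : (extHalfGrid n).Adj u u') :
    extDist n u v ≤ extDist n u' v + 1 := by
  rcases u with a | ℓ <;> rcases u' with b | m <;> rcases v with c | t <;>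
    simp only [extHalfGrid] at h
  · exact gridDist_le_of_gridAdj h c
  · simpa [extDist] using gridDist_le_of_gridAdj h (hgVert n t)
  · simp only [extDist, h]
    omega
  · simp only [extDist, h]
    split_ifs with hmt <;> simp [hmt, gridDist_self]
  · simp only [extDist, h]
    omega
  · simp only [extDist, ← h]
    split_ifs <;> simp

theorem exists_walk_length_eq_extDist {n : ℕ} (hn : 1 ≤ n) (u v : halfVert n ⊕ leafIdx n) :
    ∃ w : (extHalfGrid n).Walk u v, w.length = extDist n u v := by
  have toLeaf (ℓ : leafIdx n) :
      (extHalfGrid n).Adj (.inl ⟨_, hgVert_mem hn ℓ.2.1 ℓ.2.2⟩) (.inr ℓ) := rfl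
  rcases u with a | ℓ <;> rcases v with b | m
  · exact exists_walk_inl_length_eq_gridDist a b
  · obtain ⟨w, hw⟩ := exists_walk_inl_length_eq_gridDist a ⟨_, hgVert_mem hn m.2.1 m.2.2⟩
    exact ⟨w.concat (toLeaf m), by simp [hw, extDist]⟩
  · obtain ⟨w, hw⟩ := exists_walk_inl_length_eq_gridDist ⟨_, hgVert_mem hn ℓ.2.1 ℓ.2.2⟩ b
    exact ⟨.cons (toLeaf ℓ).symm w, by simp [hw, extDist]⟩
  · by_cases hℓm : ℓ = m
    · subst hℓm
      exact ⟨.nil, by simp [extDist]⟩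
    obtain ⟨w, hw⟩ := exists_walk_inl_length_eq_gridDist ⟨_, hgVert_mem hn ℓ.2.1 ℓ.2.2⟩
      ⟨_, hgVert_mem hn m.2.1 m.2.2⟩
    exact ⟨.cons (toLeaf ℓ).symm (w.concat (toLeaf m)), by simp [hw, extDist, hℓm]⟩

theorem dist_extHalfGrid {n : ℕ} (hn : 1 ≤ n) (u v : halfVert n ⊕ leafIdx n) :
    (extHalfGrid n).dist u v = extDist n u v := by
  refine (extHalfGrid n).dist_eq_of_adj_le_of_exists_walk _ (fun u => ?_)
    extDist_le_of_adj (exists_walk_length_eq_extDist hn) u v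
  rcases u with a | ℓ <;> simp [extDist, gridDist_self]

theorem extDist_leaf_add_ne {n : ℕ} (a : halfVert n) {m t : leafIdx n} (hmt : m ≠ t) :
    extDist n (.inl a) (.inr m) + extDist n (.inr m) (.inr t) ≠ extDist n (.inl a) (.inr t) := by
  have := gridDist_triangle a (hgVert n m) (hgVert n t)
  simp only [extDist, hmt, if_false]
  omega

theorem not_isMedianVtx_inr {n : ℕ} (hn : 1 ≤ n) (a : halfVert n) {i j : leafIdx n}
    (hij : i ≠ j) (m : leafIdx n) :
    ¬ IsMedianVtx (extHalfGrid n) (.inl a) (.inr i) (.inr j) (.inr m) := by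
  rintro ⟨hai, -, haj⟩
  simp only [dist_extHalfGrid hn] at hai haj
  by_cases hmi : m = i
  · subst hmi
    exact extDist_leaf_add_ne a hij (by simpa [extDist, hij] using haj)
  · exact extDist_leaf_add_ne a hmi (by simpa [extDist] using hai)

theorem isMedianVtx_inl_iff {n : ℕ} (hn : 1 ≤ n) (a p : halfVert n) {i j : leafIdx n}
    (hij : i ≠ j) :
    IsMedianVtx (extHalfGrid n) (.inl a) (.inr i) (.inr j) (.inl p) ↔
      (gridDist a p + gridDist p (hgVert n i) = gridDist a (hgVert n i) ∧
      gridDist (hgVert n i) p + gridDist p (hgVert n j) = gridDist (hgVert n i) (hgVert n j) ∧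
      gridDist a p + gridDist p (hgVert n j) = gridDist a (hgVert n j)) := by
  simp only [IsMedianVtx, dist_extHalfGrid hn, extDist, hij, if_false]
  omega

/-- Grid medians are taken coordinatewise, and for `i < j` we have `hgVert n i = (i, _)` and
`hgVert n j = (_, j - 1)`. -/
theorem eq_inl_of_isMedianVtx {n : ℕ} (hρ : (1, n) ∈ halfVert n) {i j : leafIdx n}
    (hij : (i : ℕ) < j) {w : halfVert n ⊕ leafIdx n}
    (hw : IsMedianVtx (extHalfGrid n) (.inl ⟨(1, n), hρ⟩) (.inr i) (.inr j) w) :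
    ∃ p : halfVert n, w = .inl p ∧ p.1 = ((i : ℕ), (j : ℕ) - 1) := by
  have hn : 1 ≤ n := by omega
  have hne : i ≠ j := fun h => hij.ne (congrArg Subtype.val h)
  rcases w with p | m
  · refine ⟨p, rfl, ?_⟩
    obtain ⟨h₁, h₂, h₃⟩ := (isMedianVtx_inl_iff hn _ p hne).mp hw
    simp only [gridDist_add_gridDist_eq_iff, hgVert_eq hn i.2.1 i.2.2, hgVert_eq hn j.2.1 j.2.2,
      mem_uIcc] at h₁ h₂ h₃
    exact Prod.ext (by omega) (by omega)
  · exact absurd hw (not_isMedianVtx_inr hn _ hne m)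

end ExtHalfGrid

theorem stmt_9_general (n : ℕ) (hρ : ((1, n) : ℕ × ℕ) ∈ halfVert n)
    (i j k l : leafIdx n) (hij : (i : ℕ) < (j : ℕ)) (hkl : (k : ℕ) < (l : ℕ))
    (w : ↥(halfVert n) ⊕ leafIdx n)
    (h1 : IsMedianVtx (extHalfGrid n) (Sum.inl ⟨(1, n), hρ⟩) (Sum.inr i) (Sum.inr j) w)
    (h2 : IsMedianVtx (extHalfGrid n) (Sum.inl ⟨(1, n), hρ⟩) (Sum.inr k) (Sum.inr l) w) :
    i = k ∧ j = l := by
  obtain ⟨p, rfl, hp⟩ := ExtHalfGrid.eq_inl_of_isMedianVtx hρ hij h1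
  obtain ⟨q, hpq, hq⟩ := ExtHalfGrid.eq_inl_of_isMedianVtx hρ hkl h2
  cases hpq
  rw [hp, Prod.mk.injEq] at hq
  exact ⟨Subtype.ext (by omega), Subtype.ext (by omega)⟩

/-- In the extended half-grid `H^ext_{n+1}` (`n ≥ 2`) with root
`ρ = (1,n)`, the assignment of pairs of distinct leaves to medians,
`{x_i, x_j} ↦ med(ρ, x_i, x_j)`, is injective: if `i < j` and `k < l` and the medians
of `(ρ, x_i, x_j)` and `(ρ, x_k, x_l)` coincide, then `i = k` and `j = l`. -/
theorem stmt_9 (n : ℕ) (hn : 2 ≤ n) (hρ : ((1, n) : ℕ × ℕ) ∈ halfVert n)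
    (i j k l : leafIdx n) (hij : (i : ℕ) < (j : ℕ)) (hkl : (k : ℕ) < (l : ℕ))
    (w : ↥(halfVert n) ⊕ leafIdx n)
    (h1 : IsMedianVtx (extHalfGrid n) (Sum.inl ⟨(1, n), hρ⟩) (Sum.inr i) (Sum.inr j) w)
    (h2 : IsMedianVtx (extHalfGrid n) (Sum.inl ⟨(1, n), hρ⟩) (Sum.inr k) (Sum.inr l) w) :
    i = k ∧ j = l :=
  stmt_9_general n hρ i j k l hij hkl w h1 h2
end

section
/- For every finite set X with |X| ≥ 2 and every symmetric map δ : X×X → Υ, there exists a rooted median graph G with root ρ, with at most |X|² + |X| vertices, whose set of leaves is (identified with) X, together with a labeling t of the vertices med(ρ,x,y) (x,y ∈ X distinct), such that δ(x,y) = t(med(ρ,x,y)) for all distinct x,y ∈ X and, moreover, ρ itself is of the form med(ρ,x,y) for some distinct x,y ∈ X. -/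
/-- `v` is a leaf of `G` relative to the root `ρ`: a degree-one vertex distinct
from `ρ` (degree one is expressed as having a unique neighbour). -/
def IsLeafAt {V : Type*} (G : SimpleGraph V) (ρ v : V) : Prop :=
  v ≠ ρ ∧ ∃! u : V, G.Adj v u

theorem apply_min_max_of_symm {α β : Type*} [LinearOrder α] {f : α → α → β}
    (hf : ∀ a b, a ≠ b → f a b = f b a) (a b : α) : f (min a b) (max a b) = f a b := by
  rcases le_total a b with h | h
  · rw [min_eq_left h, max_eq_right h]
  · rw [min_eq_right h, max_eq_left h]
    rcases eq_or_ne b a with rfl | hne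
    · rfl
    · exact hf b a hne

namespace SimpleGraph

variable {V : Type*} (G : SimpleGraph V) (D : V → V → ℕ)

theorem exists_walk_length_eq_of_exists_step (hzero : ∀ u v, D u v = 0 ↔ u = v)
    (hstep : ∀ u v, u ≠ v → ∃ w, D u w + 1 = D u v ∧ G.Adj w v) (u v : V) :
    ∃ p : G.Walk u v, p.length = D u v := by
  induction hk : D u v generalizing v with
  | zero => obtain rfl := (hzero u v).1 hk; exact ⟨.nil, rfl⟩
  | succ k ih =>
    have hne : u ≠ v := by rintro rfl; simp [(hzero u u).2 rfl] at hk
    obtain ⟨w, hw, hadj⟩ := hstep u v hne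
    obtain ⟨p, hp⟩ := ih w (by omega)
    exact ⟨p.concat hadj, by rw [Walk.length_concat, hp]⟩

theorem le_length_of_adj_le_one (hzero : ∀ u v, D u v = 0 ↔ u = v)
    (htri : ∀ u v w, D u w ≤ D u v + D v w) (hadj : ∀ u v, G.Adj u v → D u v ≤ 1)
    {u v : V} (p : G.Walk u v) : D u v ≤ p.length := by
  induction p with
  | nil => simp [(hzero _ _).2 rfl]
  | @cons a b c h q ih =>
    have := htri a b c
    have := hadj a b h
    rw [Walk.length_cons]
    omega

theorem dist_eq_of_exists_step (hzero : ∀ u v, D u v = 0 ↔ u = v)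
    (htri : ∀ u v w, D u w ≤ D u v + D v w) (hadj : ∀ u v, G.Adj u v → D u v ≤ 1)
    (hstep : ∀ u v, u ≠ v → ∃ w, D u w + 1 = D u v ∧ G.Adj w v) (u v : V) :
    G.dist u v = D u v := by
  obtain ⟨p, hp⟩ := G.exists_walk_length_eq_of_exists_step D hzero hstep u v
  obtain ⟨q, hq⟩ := p.reachable.exists_walk_length_eq_dist
  refine le_antisymm (hp ▸ G.dist_le p) ?_
  exact hq ▸ G.le_length_of_adj_le_one D hzero htri hadj q

variable {G}

theorem Connected.existsUnique_isMedianVtx_of_eq (hG : G.Connected) {u v w : V}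
    (h : u = v ∨ v = w ∨ u = w) : ∃! m, IsMedianVtx G u v w m := by
  have eq_of_between {a m : V} (hm : G.dist a m + G.dist m a = G.dist a a) : m = a :=
    (hG.dist_eq_zero_iff.1 (Nat.eq_zero_of_add_eq_zero_left (hm.trans dist_self)))
  rcases h with rfl | rfl | rfl
  · exact ⟨u, by simp [IsMedianVtx], fun m hm => eq_of_between hm.1⟩
  · exact ⟨v, by simp [IsMedianVtx], fun m hm => eq_of_between hm.2.1⟩
  · exact ⟨u, by simp [IsMedianVtx, dist_comm], fun m hm => eq_of_between hm.2.2⟩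

end SimpleGraph

namespace Fin

variable {n : ℕ}

def median (a b c : Fin n) : Fin n := max (min a b) (min (max a b) c)

theorem between_iff_eq_median (a b c m : Fin n) :
    (Nat.dist a m + Nat.dist m b = Nat.dist a b ∧ Nat.dist b m + Nat.dist m c = Nat.dist b c ∧
      Nat.dist a m + Nat.dist m c = Nat.dist a c) ↔ m = median a b c := by
  simp only [median, Nat.dist, Fin.ext_iff, Fin.coe_max, Fin.coe_min]
  omega

end Fin

namespace PendantGrid

open SimpleGraph

variable {n : ℕ}

abbrev Vertex (n : ℕ) := (Fin n × Fin n) ⊕ Fin n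

def foot : Vertex n → Fin n × Fin n := Sum.elim id fun i => (i, i)

def height : Vertex n → ℕ := Sum.elim (fun _ => 0) fun _ => 1

def gridDist (p q : Fin n × Fin n) : ℕ := Nat.dist p.1 q.1 + Nat.dist p.2 q.2

-- The path metric of the grid with a pendant vertex `inr i` hung on each `(i, i)`.
def vdist (u v : Vertex n) : ℕ :=
  if u = v then 0 else gridDist (foot u) (foot v) + height u + height v

def gridMedian (p q r : Fin n × Fin n) : Fin n × Fin n :=
  (Fin.median p.1 q.1 r.1, Fin.median p.2 q.2 r.2)

theorem gridDist_comm (p q : Fin n × Fin n) : gridDist p q = gridDist q p := by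
  simp only [gridDist, Nat.dist]; omega

theorem gridDist_self (p : Fin n × Fin n) : gridDist p p = 0 := by simp [gridDist]

theorem gridDist_triangle (p q r : Fin n × Fin n) :
    gridDist p r ≤ gridDist p q + gridDist q r := by
  simp only [gridDist, Nat.dist]; omega

theorem eq_of_gridDist_eq_zero {p q : Fin n × Fin n} (h : gridDist p q = 0) : p = q := by
  simp only [gridDist, Nat.dist] at h
  ext <;> omega

theorem gridDist_between_iff (p q m : Fin n × Fin n) :
    gridDist p m + gridDist m q = gridDist p q ↔
      Nat.dist p.1 m.1 + Nat.dist m.1 q.1 = Nat.dist p.1 q.1 ∧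
        Nat.dist p.2 m.2 + Nat.dist m.2 q.2 = Nat.dist p.2 q.2 := by
  simp only [gridDist, Nat.dist]; omega

theorem gridDist_between_iff_eq_gridMedian (p q r m : Fin n × Fin n) :
    (gridDist p m + gridDist m q = gridDist p q ∧ gridDist q m + gridDist m r = gridDist q r ∧
      gridDist p m + gridDist m r = gridDist p r) ↔ m = gridMedian p q r := by
  rw [gridDist_between_iff, gridDist_between_iff, gridDist_between_iff, gridMedian, Prod.ext_iff,
    ← Fin.between_iff_eq_median, ← Fin.between_iff_eq_median]
  tauto

theorem vdist_of_ne {u v : Vertex n} (h : u ≠ v) :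
    vdist u v = gridDist (foot u) (foot v) + height u + height v := if_neg h

theorem vdist_le (u v : Vertex n) :
    vdist u v ≤ gridDist (foot u) (foot v) + height u + height v := by
  unfold vdist; split <;> omega

theorem vdist_inl_right (u : Vertex n) (q : Fin n × Fin n) :
    vdist u (.inl q) = gridDist (foot u) q + height u := by
  by_cases h : u = .inl q
  · simp [h, vdist, foot, height, gridDist_self]
  · simp [vdist_of_ne h, foot, height]

theorem vdist_comm (u v : Vertex n) : vdist u v = vdist v u := by
  by_cases h : u = v
  · rw [h]
  · rw [vdist_of_ne h, vdist_of_ne (Ne.symm h), gridDist_comm]; omega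

theorem vdist_inl_left (q : Fin n × Fin n) (u : Vertex n) :
    vdist (.inl q) u = gridDist q (foot u) + height u := by
  rw [vdist_comm, vdist_inl_right, gridDist_comm]

theorem vdist_eq_zero_iff {u v : Vertex n} : vdist u v = 0 ↔ u = v := by
  refine ⟨fun h => ?_, fun h => by simp [h, vdist]⟩
  by_contra hne
  rw [vdist_of_ne hne] at h
  rcases u with p | i <;> rcases v with q | j <;>
    simp only [height, Sum.elim_inl, Sum.elim_inr] at h
  · exact hne (congrArg Sum.inl (eq_of_gridDist_eq_zero (by simpa [foot] using h)))
  all_goals omega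

theorem vdist_triangle (u v w : Vertex n) : vdist u w ≤ vdist u v + vdist v w := by
  by_cases huv : u = v
  · simp [huv, vdist]
  by_cases hvw : v = w
  · simp [hvw, vdist]
  rw [vdist_of_ne huv, vdist_of_ne hvw]
  have := gridDist_triangle (foot u) (foot v) (foot w)
  have := vdist_le u w
  omega

theorem exists_gridDist_step {p q : Fin n × Fin n} (h : p ≠ q) :
    ∃ q', gridDist p q' + 1 = gridDist p q ∧ gridDist q' q = 1 := by
  obtain ⟨a, b⟩ := p
  obtain ⟨c, d⟩ := q
  simp only [gridDist, Nat.dist, ne_eq, Prod.mk.injEq, Fin.ext_iff] at h ⊢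
  rcases lt_trichotomy (a : ℕ) c with hac | hac | hac
  · exact ⟨(⟨c - 1, by omega⟩, d), by simp only; omega⟩
  · rcases lt_or_gt_of_ne (show (b : ℕ) ≠ d by omega) with hbd | hbd
    · exact ⟨(c, ⟨d - 1, by omega⟩), by simp only; omega⟩
    · exact ⟨(c, ⟨d + 1, by omega⟩), by simp only; omega⟩
  · exact ⟨(⟨c + 1, by omega⟩, d), by simp only; omega⟩

def graph (n : ℕ) : SimpleGraph (Vertex n) where
  Adj u v := vdist u v = 1
  symm := ⟨fun u v h => by rwa [vdist_comm]⟩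
  loopless := ⟨fun u h => by simp [vdist] at h⟩

theorem exists_vdist_step {u v : Vertex n} (h : u ≠ v) :
    ∃ w, vdist u w + 1 = vdist u v ∧ (graph n).Adj w v := by
  show ∃ w, vdist u w + 1 = vdist u v ∧ vdist w v = 1
  rcases v with q | j
  · by_cases hq : foot u = q
    · rcases u with p | i
      · exact absurd (congrArg Sum.inl hq) h
      · refine ⟨.inr i, ?_, ?_⟩ <;> simp [← hq, vdist, foot, height, gridDist_self]
    · obtain ⟨q', hq', hstep⟩ := exists_gridDist_step hq
      refine ⟨.inl q', ?_, ?_⟩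
      · rw [vdist_inl_right, vdist_inl_right]; omega
      · simpa [vdist_inl_left, foot, height] using hstep
  · refine ⟨.inl (j, j), ?_, ?_⟩
    · simp [vdist_inl_right, vdist_of_ne h, foot, height]
    · simp [vdist_inl_left, foot, height, gridDist_self]

theorem dist_graph (u v : Vertex n) : (graph n).dist u v = vdist u v :=
  dist_eq_of_exists_step _ _ (fun _ _ => vdist_eq_zero_iff) vdist_triangle
    (fun _ _ h => le_of_eq h) (fun _ _ => exists_vdist_step) u v

theorem connected_graph [NeZero n] : (graph n).Connected :=
  have : Nonempty (Vertex n) := ⟨.inr 0⟩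
  ⟨fun u v =>
    let ⟨p, _⟩ := exists_walk_length_eq_of_exists_step _ _ (fun _ _ => vdist_eq_zero_iff)
      (fun _ _ => exists_vdist_step) u v
    p.reachable⟩

theorem vdist_add_vdist_inr_ne {a b : Vertex n} {i : Fin n} (ha : a ≠ .inr i) (hb : b ≠ .inr i) :
    vdist a (.inr i) + vdist (.inr i) b ≠ vdist a b := by
  rw [vdist_of_ne ha, vdist_of_ne (Ne.symm hb)]
  have := gridDist_triangle (foot a) (foot (.inr i)) (foot b)
  have := vdist_le a b
  have : height (.inr i : Vertex n) = 1 := rfl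
  omega

theorem isMedianVtx_inl_iff {u v w : Vertex n} (huv : u ≠ v) (hvw : v ≠ w) (huw : u ≠ w)
    (q : Fin n × Fin n) :
    IsMedianVtx (graph n) u v w (.inl q) ↔ q = gridMedian (foot u) (foot v) (foot w) := by
  rw [← gridDist_between_iff_eq_gridMedian]
  simp only [IsMedianVtx, dist_graph, vdist_inl_right, vdist_inl_left, vdist_of_ne huv,
    vdist_of_ne hvw, vdist_of_ne huw, gridDist_comm q]
  omega

theorem existsUnique_isMedianVtx [NeZero n] (u v w : Vertex n) :
    ∃! m, IsMedianVtx (graph n) u v w m := by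
  by_cases h : u = v ∨ v = w ∨ u = w
  · exact connected_graph.existsUnique_isMedianVtx_of_eq h
  simp only [not_or] at h
  obtain ⟨huv, hvw, huw⟩ := h
  refine ⟨.inl (gridMedian (foot u) (foot v) (foot w)), (isMedianVtx_inl_iff huv hvw huw _).2 rfl,
    ?_⟩
  rintro (q | i) hm
  · rw [(isMedianVtx_inl_iff huv hvw huw q).1 hm]
  · exfalso
    simp only [IsMedianVtx, dist_graph] at hm
    by_cases hu : u = .inr i
    · subst hu; exact vdist_add_vdist_inr_ne (Ne.symm huv) (Ne.symm huw) hm.2.1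
    by_cases hv : v = .inr i
    · subst hv; exact vdist_add_vdist_inr_ne hu (Ne.symm hvw) hm.2.2
    · exact vdist_add_vdist_inr_ne hu hv hm.1

theorem isMedianGraph_graph [NeZero n] : IsMedianGraph (graph n) :=
  ⟨connected_graph, existsUnique_isMedianVtx⟩

theorem graph_adj_inr_iff (i : Fin n) (u : Vertex n) :
    (graph n).Adj (.inr i) u ↔ u = .inl (i, i) := by
  show vdist _ _ = 1 ↔ _
  rcases u with q | j
  · rw [vdist_inl_right]
    simp only [foot, height, Sum.elim_inr, Sum.inl.injEq, add_eq_right]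
    exact ⟨fun h => (eq_of_gridDist_eq_zero h).symm, fun h => h ▸ gridDist_self _⟩
  · by_cases h : (Sum.inr i : Vertex n) = .inr j
    · simp [h, vdist]
    · simp [vdist_of_ne h, height]

theorem isLeafAt_inr (ρ : Fin n × Fin n) (i : Fin n) : IsLeafAt (graph n) (.inl ρ) (.inr i) :=
  ⟨Sum.inr_ne_inl, .inl (i, i), (graph_adj_inr_iff i _).2 rfl, fun u => (graph_adj_inr_iff i u).1⟩

theorem not_isLeafAt_inl (hn : 2 ≤ n) (ρ : Vertex n) (p : Fin n × Fin n) :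
    ¬ IsLeafAt (graph n) ρ (.inl p) := by
  have exists_neighbor (a : Fin n) : ∃ b : Fin n, Nat.dist a b = 1 := by
    by_cases ha : (a : ℕ) = 0
    · exact ⟨⟨1, by omega⟩, by simp [Nat.dist, ha]⟩
    · exact ⟨⟨a - 1, by omega⟩, by simp only [Nat.dist]; omega⟩
  rintro ⟨-, u, -, huniq⟩
  obtain ⟨a, ha⟩ := exists_neighbor p.1
  obtain ⟨b, hb⟩ := exists_neighbor p.2
  have h1 := huniq (.inl (a, p.2)) (by simp [graph, vdist_inl_left, foot, height, gridDist, ha])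
  have h2 := huniq (.inl (p.1, b)) (by simp [graph, vdist_inl_left, foot, height, gridDist, hb])
  have : a = p.1 := by simpa using congrArg Prod.fst (Sum.inl_injective (h1.trans h2.symm))
  simp [this] at ha

theorem range_inr_eq_setOf_isLeafAt (hn : 2 ≤ n) (ρ : Fin n × Fin n) :
    Set.range Sum.inr = {v : Vertex n | IsLeafAt (graph n) (.inl ρ) v} := by
  ext (p | i)
  · simpa using not_isLeafAt_inl hn _ p
  · simpa using isLeafAt_inr ρ i

theorem card_vertex : Nat.card (Vertex n) = n ^ 2 + n := by
  simp [Nat.card_eq_fintype_card, sq]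

theorem isMedianVtx_root {k : ℕ} {i j : Fin (k + 1)} (hij : i ≠ j) :
    IsMedianVtx (graph (k + 1)) (.inl (0, Fin.last k)) (.inr i) (.inr j)
      (.inl (min i j, max i j)) := by
  rw [isMedianVtx_inl_iff Sum.inl_ne_inr (by simpa using hij) Sum.inl_ne_inr]
  simp only [gridMedian, foot, Sum.elim_inl, Sum.elim_inr, id, Fin.median, Prod.mk.injEq]
  constructor
  · simp
  · rw [min_eq_right (Fin.le_last i), max_eq_left (Fin.le_last i), min_eq_right (Fin.le_last j)]

end PendantGrid

open PendantGrid in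
/-- For every symmetric map `δ` on a finite set `X` with `|X| ≥ 2` there
is a rooted median graph `G` with root `ρ`, with at most `|X|² + |X|` vertices, whose
leaf set is (identified with) `X`, together with a labeling `t` such that
`δ x y = t (med(ρ, x, y))` for all distinct `x, y ∈ X`, and such that `ρ` itself is
the median `med(ρ, x, y)` of some pair of distinct leaves. -/
theorem stmt_10 {X Υ : Type} [Fintype X] (h2 : 2 ≤ Fintype.card X)
    (δ : X → X → Υ) (hsym : ∀ x y : X, x ≠ y → δ x y = δ y x) :
    ∃ (V : Type) (_ : Finite V) (G : SimpleGraph V) (ρ : V) (leaf : X → V) (t : V → Υ),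
      IsMedianGraph G ∧
      Nat.card V ≤ Fintype.card X ^ 2 + Fintype.card X ∧
      Function.Injective leaf ∧
      Set.range leaf = {v : V | IsLeafAt G ρ v} ∧
      (∀ x y : X, x ≠ y →
        ∃ m, IsMedianVtx G ρ (leaf x) (leaf y) m ∧ t m = δ x y) ∧
      (∃ x y : X, x ≠ y ∧ IsMedianVtx G ρ (leaf x) (leaf y) ρ) := by
  obtain ⟨k, hk⟩ : ∃ k, Fintype.card X = k + 1 := ⟨Fintype.card X - 1, by omega⟩
  let e : X ≃ Fin (k + 1) := Fintype.equivFinOfCardEq hk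
  have h0 : (0 : Fin (k + 1)) ≠ Fin.last k := Fin.ext_iff.not.2 (by simp; omega)
  have hδ : ∀ i j : Fin (k + 1), i ≠ j → δ (e.symm i) (e.symm j) = δ (e.symm j) (e.symm i) :=
    fun i j hij => hsym _ _ (e.symm.injective.ne hij)
  refine ⟨Vertex (k + 1), inferInstance, graph (k + 1), .inl (0, Fin.last k), fun x => .inr (e x),
    fun v => δ (e.symm (foot v).1) (e.symm (foot v).2), isMedianGraph_graph,
    by rw [card_vertex, hk], fun x y h => e.injective (Sum.inr_injective h), ?_, ?_, ?_⟩
  · rw [← range_inr_eq_setOf_isLeafAt (by omega)]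
    exact EquivLike.range_comp Sum.inr e
  · intro x y hxy
    refine ⟨_, isMedianVtx_root (e.injective.ne hxy), ?_⟩
    simpa [foot] using apply_min_max_of_symm hδ (e x) (e y)
  · exact ⟨e.symm 0, e.symm (Fin.last k), e.symm.injective.ne h0,
      by simpa using isMedianVtx_root h0⟩
end

section
/- Let δ : X×X → Υ be a symmetric map on a finite set X with |X| ≥ 2, let Mmax(δ) be the (partition of X formed by the) inclusion-maximal strong modules of δ that are proper subsets of X, and let δ/Mmax(δ) be the quotient map. Then δ/Mmax(δ) is either complete or prime. Moreover, if δ is a symbolic ultrametric, then δ/Mmax(δ) is complete. -/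
/-!
Write `G_c = labelGraph δ c` for the graph joining distinct points with label `c`, and
`H_c = G_cᶜ`. If some `H_c` is disconnected, its components are strong modules joined to each
other only by the label `c`, so they are the maximal strong modules and the quotient is complete.
A non-prime quotient yields two overlapping modules covering `X`, and every edge leaving their
intersection carries one label `c`, which disconnects `H_c`. For a symbolic ultrametric, (U2)
makes some `G_c` connected, while (U1) and (U2) forbid induced paths on four vertices in it; by
Seinsche's theorem its complement `H_c` is then disconnected.
-/

/-- `M` is a module of `δ` relative to the ground set `A`: `M ⊆ A` and all elements
of `M` have the same `δ`-relation to every element of `A ∖ M`.  (For `A = Set.univ`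
this is the usual notion of a module of `δ`; for general `A` it is the notion of a
module of the restriction `δ|A`.) -/
def IsModuleOn {X Υ : Type*} (δ : X → X → Υ) (A M : Set X) : Prop :=
  M ⊆ A ∧ ∀ x ∈ M, ∀ y ∈ M, ∀ z ∈ A \ M, δ x z = δ y z

/-- `M` is a strong module of `δ` relative to the ground set `A`: a module that does
not overlap any other module, i.e. `M ∩ M' ∈ {M, M', ∅}` for every module `M'`. -/
def IsStrongModuleOn {X Υ : Type*} (δ : X → X → Υ) (A M : Set X) : Prop :=
  IsModuleOn δ A M ∧
  ∀ M', IsModuleOn δ A M' → M ∩ M' = M ∨ M ∩ M' = M' ∨ M ∩ M' = ∅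

/-- `Mmax δ A`: the set of inclusion-maximal strong modules of `δ|A` that are proper
subsets of the ground set `A`. -/
def Mmax {X Υ : Type*} (δ : X → X → Υ) (A : Set X) : Set (Set X) :=
  {M | IsStrongModuleOn δ A M ∧ M ≠ A ∧
    ∀ M', IsStrongModuleOn δ A M' → M' ≠ A → M ⊆ M' → M' = M}

/-- The quotient map `δ|A / Mmax(δ|A)` is complete: it assigns the same label to every
pair of distinct elements of `Mmax δ A` (labels being read off via representatives,
which is well-defined for disjoint modules). -/
def QuotientComplete {X Υ : Type*} (δ : X → X → Υ) (A : Set X) : Prop :=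
  ∀ M ∈ Mmax δ A, ∀ N ∈ Mmax δ A, ∀ M' ∈ Mmax δ A, ∀ N' ∈ Mmax δ A,
    M ≠ N → M' ≠ N' →
    ∀ x ∈ M, ∀ y ∈ N, ∀ x' ∈ M', ∀ y' ∈ N', δ x y = δ x' y'

/-- The quotient map `δ|A / Mmax(δ|A)` is prime: every module `𝒮` of the quotient map
(a set of elements of `Mmax δ A` all of whose members have the same quotient label to
each member of `Mmax δ A` outside `𝒮`, labels read off via representatives) is
trivial, i.e. empty, everything, or a singleton. -/
def QuotientPrime {X Υ : Type*} (δ : X → X → Υ) (A : Set X) : Prop :=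
  ∀ 𝒮 ⊆ Mmax δ A,
    (∀ M ∈ 𝒮, ∀ M' ∈ 𝒮, ∀ N ∈ Mmax δ A \ 𝒮,
      ∀ x ∈ M, ∀ x' ∈ M', ∀ z ∈ N, δ x z = δ x' z) →
    𝒮 = ∅ ∨ 𝒮 = Mmax δ A ∨ ∃ M, 𝒮 = {M}

/-- `δ` is a symbolic ultrametric: a symmetric map satisfying
(U1) there is no 4-element subset `{x,y,u,v}` with
`δ(x,y) = δ(y,u) = δ(u,v) ≠ δ(y,v) = δ(x,v) = δ(x,u)`, and
(U2) `|{δ(x,y), δ(x,z), δ(y,z)}| ≤ 2` for all distinct `x, y, z`. -/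
def SymbolicUltrametric {X Υ : Type*} (δ : X → X → Υ) : Prop :=
  (¬ ∃ x y u v : X, x ≠ y ∧ x ≠ u ∧ x ≠ v ∧ y ≠ u ∧ y ≠ v ∧ u ≠ v ∧
      δ x y = δ y u ∧ δ y u = δ u v ∧ δ y v = δ x v ∧ δ x v = δ x u ∧
      δ x y ≠ δ y v) ∧
  (∀ x y z : X, x ≠ y → x ≠ z → y ≠ z →
    ({δ x y, δ x z, δ y z} : Set Υ).ncard ≤ 2)

namespace SimpleGraph

variable {V : Type*} {G : SimpleGraph V}

theorem Reachable.mem_of_adj_closed {S : Set V} {a b : V} (h : G.Reachable a b) (ha : a ∈ S)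
    (hS : ∀ x ∈ S, ∀ y, G.Adj x y → y ∈ S) : b ∈ S := by
  by_contra hb
  obtain ⟨p⟩ := h
  obtain ⟨d, -, hd, hd'⟩ := p.exists_boundary_dart S ha hb
  exact hd' (hS _ hd _ d.adj)

theorem Reachable.not_adj_of_not_reachable {x a z : V} (ha : G.Reachable x a)
    (hz : ¬G.Reachable x z) : ¬G.Adj a z :=
  fun h => hz (ha.trans h.reachable)

def IsInducedP4 (G : SimpleGraph V) (a b c d : V) : Prop :=
  G.Adj a b ∧ G.Adj b c ∧ G.Adj c d ∧ ¬G.Adj a c ∧ ¬G.Adj b d ∧ ¬G.Adj a d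

theorem IsInducedP4.pairwise_ne {a b c d : V} (h : G.IsInducedP4 a b c d) :
    a ≠ b ∧ a ≠ c ∧ a ≠ d ∧ b ≠ c ∧ b ≠ d ∧ c ≠ d := by
  obtain ⟨hab, hbc, hcd, hac, hbd, had⟩ := h
  refine ⟨hab.ne, ?_, ?_, hbc.ne, ?_, hcd.ne⟩
  · rintro rfl; exact had hcd
  · rintro rfl; exact hac hcd.symm
  · rintro rfl; exact had hab

theorem IsInducedP4.compl {a b c d : V} (h : G.IsInducedP4 a b c d) : Gᶜ.IsInducedP4 b d a c := by
  obtain ⟨-, hac, had, -, hbd, -⟩ := h.pairwise_ne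
  obtain ⟨hab, hbc, hcd, hac', hbd', had'⟩ := h
  exact ⟨⟨hbd, hbd'⟩, ⟨had.symm, fun h => had' h.symm⟩, ⟨hac, hac'⟩,
    fun h => h.2 hab.symm, fun h => h.2 hcd.symm, fun h => h.2 hbc⟩

theorem IsInducedP4.of_induce {s : Set V} {a b c d : s} (h : (G.induce s).IsInducedP4 a b c d) :
    G.IsInducedP4 a b c d :=
  h

theorem induce_compl (G : SimpleGraph V) (s : Set V) : (G.induce s)ᶜ = Gᶜ.induce s := by
  ext a b
  simp [Subtype.ext_iff]

theorem Preconnected.exists_adj_reachable_induce_compl_singleton (hG : G.Preconnected) (v : V)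
    (z : ({v}ᶜ : Set V)) : ∃ a : ({v}ᶜ : Set V), G.Adj v a ∧ (G.induce {v}ᶜ).Reachable a z := by
  let S : Set V := {y | ∀ hy : y ∈ ({v}ᶜ : Set V),
    ∃ a : ({v}ᶜ : Set V), G.Adj v a ∧ (G.induce {v}ᶜ).Reachable a ⟨y, hy⟩}
  refine (hG v z).mem_of_adj_closed (S := S) (fun hv => (hv rfl).elim) ?_ z.2
  intro x hx y hxy hy
  by_cases hxv : x = v
  · subst hxv
    exact ⟨⟨y, hy⟩, hxy, .rfl⟩
  · obtain ⟨a, hva, ha⟩ := hx hxv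
    exact ⟨a, hva, ha.trans (Adj.reachable (G := G.induce {v}ᶜ) (u := ⟨x, hxv⟩) hxy)⟩

/-- If deleting `v` disconnects `G` while `Gᶜ` stays connected, then a non-neighbour of `v`
forces an induced path `b - a - v - u` with `u` in another component of `G - v`. -/
theorem exists_isInducedP4_of_not_preconnected_induce [Nontrivial V] (hG : G.Preconnected)
    (hGc : Gᶜ.Preconnected) {v : V} (hv : ¬(G.induce {v}ᶜ).Preconnected) :
    ∃ a b c d, G.IsInducedP4 a b c d := by
  set G' := G.induce {v}ᶜ
  have reach := hG.exists_adj_reachable_induce_compl_singleton v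
  obtain ⟨x, y, hxy⟩ : ∃ x y, ¬G'.Reachable x y := by simpa [Preconnected] using hv
  obtain ⟨ax, hvax, hax⟩ := reach x
  obtain ⟨ay, hvay, hay⟩ := reach y
  obtain ⟨w, hvw, hnvw⟩ := hGc.exists_adj_of_nontrivial v
  obtain ⟨aw, hvaw, haw⟩ := reach ⟨w, hvw.symm⟩
  obtain ⟨a, hva, b, hab, hvb⟩ :
      ∃ a : ({v}ᶜ : Set V), G.Adj v a ∧ ∃ b, G'.Adj a b ∧ ¬G.Adj v b := by
    by_contra! h
    exact hnvw (haw.mem_of_adj_closed (S := {t : ({v}ᶜ : Set V) | G.Adj v t}) hvaw h)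
  obtain ⟨u, hvu, hau⟩ : ∃ u : ({v}ᶜ : Set V), G.Adj v u ∧ ¬G'.Reachable a u := by
    by_cases h : G'.Reachable a ax
    · exact ⟨ay, hvay, fun h' => hxy (hax.symm.trans (h.symm.trans (h'.trans hay)))⟩
    · exact ⟨ax, hvax, h⟩
  exact ⟨b, a, v, u, hab.symm, hva.symm, hvu, fun h => hvb h.symm,
    fun h => hau (Adj.reachable (G := G') h), fun h => hau (hab.reachable.trans (Adj.reachable (G := G') h))⟩

/-- Seinsche's theorem. -/
theorem exists_isInducedP4_of_preconnected_compl [Finite V] [hV : Nontrivial V]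
    (hG : G.Preconnected) (hGc : Gᶜ.Preconnected) : ∃ a b c d, G.IsInducedP4 a b c d := by
  revert hV
  induction V using Finite.induction_subsingleton_or_nontrivial with
  | hbase V => intro hV; exact (not_nontrivial V hV).elim
  | hstep V ih =>
    intro _
    obtain ⟨v⟩ := ‹Nontrivial V›.to_nonempty
    rcases subsingleton_or_nontrivial ({v}ᶜ : Set V) with hV' | hV'
    · obtain ⟨w, hw⟩ := hG.exists_adj_of_nontrivial v
      obtain ⟨w', hw'⟩ := hGc.exists_adj_of_nontrivial v
      have hww' : w = w' := congrArg Subtype.val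
        (Subsingleton.elim (⟨w, hw.ne.symm⟩ : ({v}ᶜ : Set V)) ⟨w', hw'.ne.symm⟩)
      exact (hw'.2 (hww' ▸ hw)).elim
    · by_cases h : (G.induce {v}ᶜ).Preconnected
      · by_cases h' : (Gᶜ.induce {v}ᶜ).Preconnected
        · obtain ⟨a, b, c, d, hP⟩ := ih _ (Finite.card_subtype_lt (x := v) (by simp))
            (G := G.induce {v}ᶜ) h (by rwa [induce_compl])
          exact ⟨a, b, c, d, hP.of_induce⟩
        · obtain ⟨a, b, c, d, hP⟩ :=
            exists_isInducedP4_of_not_preconnected_induce hGc (by rwa [compl_compl]) h'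
          exact ⟨b, d, a, c, by simpa using hP.compl⟩
      · exact exists_isInducedP4_of_not_preconnected_induce hG hGc h

end SimpleGraph

section Modules

variable {X Υ : Type*} {δ : X → X → Υ}

theorem isModuleOn_univ_iff {M : Set X} :
    IsModuleOn δ Set.univ M ↔ ∀ x ∈ M, ∀ y ∈ M, ∀ z ∉ M, δ x z = δ y z := by
  simp [IsModuleOn]

theorem IsModuleOn.union {V W : Set X} (hV : IsModuleOn δ Set.univ V)
    (hW : IsModuleOn δ Set.univ W) (hVW : (V ∩ W).Nonempty) : IsModuleOn δ Set.univ (V ∪ W) := by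
  obtain ⟨a, haV, haW⟩ := hVW
  rw [isModuleOn_univ_iff] at hV hW ⊢
  have to_a : ∀ x ∈ V ∪ W, ∀ z ∉ V ∪ W, δ x z = δ a z := by
    rintro x (hx | hx) z hz
    · exact hV x hx a haV z fun h => hz (.inl h)
    · exact hW x hx a haW z fun h => hz (.inr h)
  intro x hx y hy z hz
  rw [to_a x hx z hz, to_a y hy z hz]

theorem IsStrongModuleOn.subset_or_subset_or_disjoint {M N : Set X}
    (hM : IsStrongModuleOn δ Set.univ M) (hN : IsModuleOn δ Set.univ N) :
    M ⊆ N ∨ N ⊆ M ∨ Disjoint M N := by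
  rw [← Set.inter_eq_left, ← Set.inter_eq_right, Set.disjoint_iff_inter_eq_empty]
  exact hM.2 N hN

theorem IsStrongModuleOn.subset_or_subset_compl {M N : Set X}
    (hM : IsStrongModuleOn δ Set.univ M) (hN : IsModuleOn δ Set.univ N)
    (hNc : IsModuleOn δ Set.univ Nᶜ) : M ⊆ N ∨ M ⊆ Nᶜ ∨ M = Set.univ := by
  rcases hM.subset_or_subset_or_disjoint hN with h | hNM | h
  · exact .inl h
  · rcases hM.subset_or_subset_or_disjoint hNc with h' | h' | h'
    · exact .inr (.inl h')
    · exact .inr (.inr (Set.eq_univ_of_forall fun x => (em (x ∈ N)).elim (hNM ·) (h' ·)))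
    · exact .inl (Set.disjoint_compl_right_iff_subset.1 h')
  · exact .inr (.inl h.subset_compl_right)

theorem isStrongModuleOn_singleton (x : X) : IsStrongModuleOn δ Set.univ {x} := by
  refine ⟨isModuleOn_univ_iff.2 ?_, fun M' _ => ?_⟩
  · rintro a rfl b rfl z -
    rfl
  · rcases Set.subset_singleton_iff_eq.1 (Set.inter_subset_left (t := M')) with h | h
    · exact .inr (.inr h)
    · exact .inl h

theorem exists_mem_mmax_superset [Finite X] {S : Set X} (hS : IsStrongModuleOn δ Set.univ S)
    (hS' : S ≠ Set.univ) : ∃ M ∈ Mmax δ Set.univ, S ⊆ M := by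
  obtain ⟨M, ⟨hM, hM', hSM⟩, hmax⟩ :=
    (Set.toFinite {M | IsStrongModuleOn δ Set.univ M ∧ M ≠ Set.univ ∧ S ⊆ M}).exists_maximal
      ⟨S, hS, hS', subset_rfl⟩
  exact ⟨M, ⟨hM, hM', fun N hN hN' hMN => (hmax ⟨hN, hN', hSM.trans hMN⟩ hMN).antisymm hMN⟩, hSM⟩

theorem exists_mem_mmax [Finite X] [Nontrivial X] (x : X) : ∃ M ∈ Mmax δ Set.univ, x ∈ M := by
  obtain ⟨M, hM, hxM⟩ :=
    exists_mem_mmax_superset (isStrongModuleOn_singleton (δ := δ) x) (Set.singleton_ne_univ x)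
  exact ⟨M, hM, hxM rfl⟩

theorem nonempty_of_mem_mmax [Nontrivial X] {M : Set X} (hM : M ∈ Mmax δ Set.univ) :
    M.Nonempty := by
  rw [Set.nonempty_iff_ne_empty]
  rintro rfl
  obtain ⟨x⟩ := ‹Nontrivial X›.to_nonempty
  exact Set.singleton_ne_empty x
    (hM.2.2 {x} (isStrongModuleOn_singleton x) (Set.singleton_ne_univ x) (Set.empty_subset _))

theorem disjoint_of_mem_mmax {M N : Set X} (hM : M ∈ Mmax δ Set.univ) (hN : N ∈ Mmax δ Set.univ)
    (hMN : M ≠ N) : Disjoint M N := by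
  rcases hM.1.subset_or_subset_or_disjoint hN.1.1 with h | h | h
  · exact (hMN (hM.2.2 N hN.1 hN.2.1 h).symm).elim
  · exact (hMN (hN.2.2 M hM.1 hM.2.1 h)).elim
  · exact h

end Modules

section LabelGraph

variable {X Υ : Type*} {δ : X → X → Υ}

def labelGraph (δ : X → X → Υ) (c : Υ) : SimpleGraph X :=
  SimpleGraph.fromRel fun x y => δ x y = c

theorem labelGraph_adj (hsym : ∀ x y : X, x ≠ y → δ x y = δ y x) {c : Υ} {x y : X} :
    (labelGraph δ c).Adj x y ↔ x ≠ y ∧ δ x y = c := by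
  rw [labelGraph, SimpleGraph.fromRel_adj, and_congr_right_iff]
  intro hxy
  rw [hsym y x hxy.symm, or_self]

theorem compl_labelGraph_adj (hsym : ∀ x y : X, x ≠ y → δ x y = δ y x) {c : Υ} {x y : X} :
    (labelGraph δ c)ᶜ.Adj x y ↔ x ≠ y ∧ δ x y ≠ c := by
  rw [SimpleGraph.compl_adj, labelGraph_adj hsym]
  tauto

theorem label_eq_of_reachable_of_not_reachable (hsym : ∀ x y : X, x ≠ y → δ x y = δ y x)
    {c : Υ} {x a z : X} (ha : (labelGraph δ c)ᶜ.Reachable x a)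
    (hz : ¬(labelGraph δ c)ᶜ.Reachable x z) : δ a z = c := by
  by_contra h
  exact ha.not_adj_of_not_reachable hz
    ((compl_labelGraph_adj hsym).2 ⟨fun e => hz (e ▸ ha), h⟩)

theorem isModuleOn_reachable (hsym : ∀ x y : X, x ≠ y → δ x y = δ y x) (c : Υ) (x : X) :
    IsModuleOn δ Set.univ {y | (labelGraph δ c)ᶜ.Reachable x y} := by
  rw [isModuleOn_univ_iff]
  intro a ha b hb z hz
  rw [label_eq_of_reachable_of_not_reachable hsym ha hz,
    label_eq_of_reachable_of_not_reachable hsym hb hz]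

theorem isModuleOn_compl_reachable (hsym : ∀ x y : X, x ≠ y → δ x y = δ y x) (c : Υ) (x : X) :
    IsModuleOn δ Set.univ {y | (labelGraph δ c)ᶜ.Reachable x y}ᶜ := by
  rw [isModuleOn_univ_iff]
  intro a ha b hb z hz
  rw [Set.notMem_compl_iff] at hz
  rw [hsym a z (fun e => ha (e ▸ hz)), hsym b z (fun e => hb (e ▸ hz)),
    label_eq_of_reachable_of_not_reachable hsym hz ha,
    label_eq_of_reachable_of_not_reachable hsym hz hb]

/-- A module `W` overlapping the component `K` of `(labelGraph δ c)ᶜ` would make every edge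
from `K ∩ W` to `K ∖ W` carry the label `c`, disconnecting `K`. -/
theorem isStrongModuleOn_reachable (hsym : ∀ x y : X, x ≠ y → δ x y = δ y x) (c : Υ) (x : X) :
    IsStrongModuleOn δ Set.univ {y | (labelGraph δ c)ᶜ.Reachable x y} := by
  set K := {y | (labelGraph δ c)ᶜ.Reachable x y}
  refine ⟨isModuleOn_reachable hsym c x, fun W hW => ?_⟩
  rw [Set.inter_eq_left, Set.inter_eq_right, ← Set.not_nonempty_iff_eq_empty]
  by_contra! hover
  obtain ⟨hKW, hWK, a, haK, haW⟩ := hover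
  obtain ⟨b, hbK, hbW⟩ := Set.not_subset.1 hKW
  obtain ⟨w, hwW, hwK⟩ := Set.not_subset.1 hWK
  rw [isModuleOn_univ_iff] at hW
  obtain ⟨p, ⟨hpK, hpW⟩, q, hq, hpq⟩ : ∃ p ∈ K ∩ W, ∃ q ∉ K ∩ W, (labelGraph δ c)ᶜ.Adj p q := by
    by_contra! h
    exact hbW ((haK.symm.trans hbK).mem_of_adj_closed (S := K ∩ W) ⟨haK, haW⟩
      fun p hp q hpq => by_contra fun hq => h p hp q hq hpq).2
  have hqK : q ∈ K := hpK.trans hpq.reachable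
  have hqW : q ∉ W := fun h => hq ⟨hqK, h⟩
  rw [compl_labelGraph_adj hsym] at hpq
  apply hpq.2
  rw [hW p hpW w hwW q hqW, hsym w q (fun e => hwK (e ▸ hqK)),
    label_eq_of_reachable_of_not_reachable hsym hqK hwK]

theorem eq_reachable_of_mem_mmax (hsym : ∀ x y : X, x ≠ y → δ x y = δ y x) {c : Υ}
    (hH : ¬(labelGraph δ c)ᶜ.Preconnected) {M : Set X} (hM : M ∈ Mmax δ Set.univ) {x : X}
    (hx : x ∈ M) : M = {y | (labelGraph δ c)ᶜ.Reachable x y} := by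
  have hproper : {y | (labelGraph δ c)ᶜ.Reachable x y} ≠ Set.univ := fun h =>
    hH fun a b => (Set.eq_univ_iff_forall.1 h a).symm.trans (Set.eq_univ_iff_forall.1 h b)
  rcases hM.1.subset_or_subset_compl (isModuleOn_reachable hsym c x)
      (isModuleOn_compl_reachable hsym c x) with h | h | h
  · exact (hM.2.2 _ (isStrongModuleOn_reachable hsym c x) hproper h).symm
  · exact (h hx .rfl).elim
  · exact (hM.2.1 h).elim

theorem quotientComplete_of_not_preconnected (hsym : ∀ x y : X, x ≠ y → δ x y = δ y x)
    {c : Υ} (hH : ¬(labelGraph δ c)ᶜ.Preconnected) : QuotientComplete δ Set.univ := by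
  have label_eq : ∀ P ∈ Mmax δ Set.univ, ∀ Q ∈ Mmax δ Set.univ, P ≠ Q →
      ∀ a ∈ P, ∀ b ∈ Q, δ a b = c := by
    intro P hP Q hQ hPQ a ha b hb
    refine label_eq_of_reachable_of_not_reachable hsym .rfl fun hab => hPQ ?_
    rw [eq_reachable_of_mem_mmax hsym hH hP ha, eq_reachable_of_mem_mmax hsym hH hQ hb]
    ext z
    exact ⟨hab.symm.trans, hab.trans⟩
  intro M hM N hN M' hM' N' hN' hMN hM'N' x hx y hy x' hx' y' hy'
  rw [label_eq M hM N hN hMN x hx y hy, label_eq M' hM' N' hN' hM'N' x' hx' y' hy']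

end LabelGraph

section NotPrime

variable {X Υ : Type*} {δ : X → X → Υ}

theorem label_eq_of_mem_of_mem_sdiff (hsym : ∀ x y : X, x ≠ y → δ x y = δ y x) {V W : Set X}
    (hV : IsModuleOn δ Set.univ V) (hW : IsModuleOn δ Set.univ W) {x y u w : X} (hx : x ∈ V)
    (hy : y ∈ W) (hyV : y ∉ V) (hu : u ∈ V) (huW : u ∉ W) (hw : w ∈ W) : δ x y = δ u w := by
  rw [isModuleOn_univ_iff] at hV hW
  rw [hV x hx u hu y hyV, hsym u y (fun e => hyV (e ▸ hu)), hW y hy w hw u huW,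
    hsym w u (fun e => huW (e ▸ hw))]

theorem not_preconnected_of_union_eq_univ (hsym : ∀ x y : X, x ≠ y → δ x y = δ y x)
    {V W : Set X} (hV : IsModuleOn δ Set.univ V) (hW : IsModuleOn δ Set.univ W)
    (hVW : V ∪ W = Set.univ) {a u w : X} (ha : a ∈ V ∩ W) (hu : u ∈ V) (huW : u ∉ W)
    (hw : w ∈ W) (hwV : w ∉ V) : ¬(labelGraph δ (δ u w))ᶜ.Preconnected := by
  intro hH
  refine hwV ((hH a w).mem_of_adj_closed ha fun p ⟨hpV, hpW⟩ q hpq => by_contra fun hq => ?_).1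
  rw [compl_labelGraph_adj hsym] at hpq
  apply hpq.2
  rcases (hVW ▸ Set.mem_univ q : q ∈ V ∪ W) with hqV | hqW
  · rw [label_eq_of_mem_of_mem_sdiff hsym hW hV hpW hqV (fun h => hq ⟨hqV, h⟩) hw hwV hu,
      hsym w u (fun e => hwV (e ▸ hu))]
  · exact label_eq_of_mem_of_mem_sdiff hsym hV hW hpV hqW (fun h => hq ⟨h, hqW⟩) hu huW hw

/-- The witness is the union of a nontrivial module of the quotient. -/
theorem exists_isModuleOn_not_subset_of_not_quotientPrime [Finite X] [Nontrivial X]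
    (h : ¬QuotientPrime δ Set.univ) : ∃ U, IsModuleOn δ Set.univ U ∧ U ≠ Set.univ ∧
      ∀ S, IsStrongModuleOn δ Set.univ S → S ≠ Set.univ → ¬U ⊆ S := by
  unfold QuotientPrime at h
  push Not at h
  obtain ⟨𝒮, h𝒮, hmod, hne, hne', hsing⟩ := h
  obtain ⟨M₁, hM₁⟩ := hne
  obtain ⟨M₂, hM₂, hM₂₁⟩ : ∃ M₂ ∈ 𝒮, M₂ ≠ M₁ := by
    by_contra! h
    exact hsing M₁ (Set.eq_singleton_iff_unique_mem.2 ⟨hM₁, h⟩)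
  obtain ⟨N, hN, hN𝒮⟩ := Set.exists_of_ssubset (h𝒮.ssubset_of_ne hne')
  refine ⟨⋃₀ 𝒮, ?_, ?_, ?_⟩
  · rw [isModuleOn_univ_iff]
    rintro x ⟨Mx, hMx, hx⟩ y ⟨My, hMy, hy⟩ z hz
    obtain ⟨Nz, hNz, hzN⟩ := exists_mem_mmax (δ := δ) z
    exact hmod Mx hMx My hMy Nz ⟨hNz, fun h => hz ⟨Nz, h, hzN⟩⟩ x hx y hy z hzN
  · obtain ⟨n, hn⟩ := nonempty_of_mem_mmax hN
    intro hU
    obtain ⟨M, hM, hnM⟩ := (hU ▸ Set.mem_univ n : n ∈ ⋃₀ 𝒮)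
    exact Set.disjoint_left.1 (disjoint_of_mem_mmax (h𝒮 hM) hN (ne_of_mem_of_not_mem hM hN𝒮))
      hnM hn
  · intro S hS hS' hUS
    have h₁ := (h𝒮 hM₁).2.2 S hS hS' ((Set.subset_sUnion_of_mem hM₁).trans hUS)
    have h₂ := (h𝒮 hM₂).2.2 S hS hS' ((Set.subset_sUnion_of_mem hM₂).trans hUS)
    exact hM₂₁ (h₂.symm.trans h₁)

/-- A maximal proper module `V` containing `U` is not strong; a module `W` overlapping it
extends it to `V ∪ W`, which by maximality is everything. -/
theorem exists_overlapping_modules_of_forall_not_subset [Finite X] {U : Set X} (hU : IsModuleOn δ Set.univ U)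
    (hU' : U ≠ Set.univ) (h : ∀ S, IsStrongModuleOn δ Set.univ S → S ≠ Set.univ → ¬U ⊆ S) :
    ∃ V W, IsModuleOn δ Set.univ V ∧ IsModuleOn δ Set.univ W ∧ V ∪ W = Set.univ ∧
      (V ∩ W).Nonempty ∧ (V \ W).Nonempty ∧ (W \ V).Nonempty := by
  obtain ⟨V, ⟨hV, hV', hUV⟩, hmax⟩ :=
    (Set.toFinite {V | IsModuleOn δ Set.univ V ∧ V ≠ Set.univ ∧ U ⊆ V}).exists_maximal
      ⟨U, hU, hU', subset_rfl⟩
  obtain ⟨W, hW, hover⟩ : ∃ W, IsModuleOn δ Set.univ W ∧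
      ¬(V ∩ W = V ∨ V ∩ W = W ∨ V ∩ W = ∅) := by
    by_contra! hs
    exact h V ⟨hV, hs⟩ hV' hUV
  rw [Set.inter_eq_left, Set.inter_eq_right, ← Set.not_nonempty_iff_eq_empty] at hover
  push Not at hover
  obtain ⟨hVW, hWV, hVW'⟩ := hover
  have hunion : V ∪ W = Set.univ := by
    by_contra hne
    exact hWV (Set.union_subset_iff.1 (hmax ⟨hV.union hW hVW', hne, hUV.trans
      Set.subset_union_left⟩ Set.subset_union_left)).2
  exact ⟨V, W, hV, hW, hunion, hVW', Set.sdiff_nonempty.2 hVW, Set.sdiff_nonempty.2 hWV⟩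

theorem exists_not_preconnected_of_not_quotientPrime [Finite X] [Nontrivial X]
    (hsym : ∀ x y : X, x ≠ y → δ x y = δ y x) (h : ¬QuotientPrime δ Set.univ) :
    ∃ c, ¬(labelGraph δ c)ᶜ.Preconnected := by
  obtain ⟨U, hU, hU', hUS⟩ := exists_isModuleOn_not_subset_of_not_quotientPrime h
  obtain ⟨V, W, hV, hW, hVW, ⟨a, ha⟩, ⟨u, hu, huW⟩, ⟨w, hw, hwV⟩⟩ :=
    exists_overlapping_modules_of_forall_not_subset hU hU' hUS
  exact ⟨_, not_preconnected_of_union_eq_univ hsym hV hW hVW ha hu huW hw hwV⟩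

end NotPrime

theorem Set.eq_or_eq_or_eq_of_ncard_le_two {α : Type*} {a b c : α}
    (h : ({a, b, c} : Set α).ncard ≤ 2) : a = b ∨ a = c ∨ b = c := by
  by_contra! hne
  obtain ⟨hab, hac, hbc⟩ := hne
  have := Set.ncard_eq_three.2 ⟨a, b, c, hab, hac, hbc, rfl⟩
  omega

section SymbolicUltrametric

variable {X Υ : Type*} {δ : X → X → Υ}

/-- Along edges of `labelGraph δ c` inside the component of `x`, (U2) keeps the label seen
from an outside point `v` constant. -/
theorem label_eq_of_reachable_labelGraph (hsym : ∀ x y : X, x ≠ y → δ x y = δ y x)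
    (hU2 : ∀ x y z : X, x ≠ y → x ≠ z → y ≠ z → ({δ x y, δ x z, δ y z} : Set Υ).ncard ≤ 2)
    {c : Υ} {x k v : X} (hk : (labelGraph δ c).Reachable x k)
    (hv : ¬(labelGraph δ c).Reachable x v) : δ v k = δ v x := by
  have outside : ∀ p, (labelGraph δ c).Reachable x p → v ≠ p ∧ δ v p ≠ c := fun p hp =>
    have hvp : v ≠ p := fun e => hv (e ▸ hp)
    ⟨hvp, fun h => hp.not_adj_of_not_reachable hv ((labelGraph_adj hsym).2 ⟨hvp.symm,
      hsym p v hvp.symm ▸ h⟩)⟩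
  refine (hk.mem_of_adj_closed (S := {p | (labelGraph δ c).Reachable x p ∧ δ v p = δ v x})
    ⟨.rfl, rfl⟩ fun p ⟨hp, hvp⟩ q hpq => ⟨hp.trans hpq.reachable, ?_⟩).2
  obtain ⟨hvp', hpc⟩ := outside p hp
  obtain ⟨hvq, hqc⟩ := outside q (hp.trans hpq.reachable)
  rw [labelGraph_adj hsym] at hpq
  rcases Set.eq_or_eq_or_eq_of_ncard_le_two (hU2 v p q hvp' hvq hpq.1) with h | h | h
  · rw [← h, hvp]
  · exact (hpc (h.trans hpq.2)).elim
  · exact (hqc (h.trans hpq.2)).elim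

/-- A largest component among all graphs `labelGraph δ (δ x y)` is everything: a point `v`
outside the component `K` of `x` sees `K` with the single label `δ v x`, so the component of `v`
in `labelGraph δ (δ v x)` contains `K ∪ {v}`. -/
theorem exists_preconnected_labelGraph [Finite X] [Nontrivial X]
    (hsym : ∀ x y : X, x ≠ y → δ x y = δ y x)
    (hU2 : ∀ x y z : X, x ≠ y → x ≠ z → y ≠ z → ({δ x y, δ x z, δ y z} : Set Υ).ncard ≤ 2) :
    ∃ c, (labelGraph δ c).Preconnected := by
  let comp : X × X → Set X := fun p => {z | (labelGraph δ (δ p.1 p.2)).Reachable p.1 z}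
  have : Nonempty {p : X × X // p.1 ≠ p.2} :=
    let ⟨x, y, hxy⟩ := exists_pair_ne X
    ⟨⟨(x, y), hxy⟩⟩
  obtain ⟨⟨⟨x, y⟩, hxy⟩, hmax⟩ := Finite.exists_max fun p : {p : X × X // p.1 ≠ p.2} =>
    (comp p.1).ncard
  refine ⟨δ x y, fun a b => ?_⟩
  suffices hall : ∀ z, z ∈ comp (x, y) from (hall a).symm.trans (hall b)
  by_contra! ⟨v, hv⟩
  have hvx : v ≠ x := by
    rintro rfl
    exact hv .rfl
  have hsub : insert v (comp (x, y)) ⊆ comp (v, x) := by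
    rintro z (rfl | hz)
    · exact .rfl
    · exact ((labelGraph_adj hsym).2 ⟨(ne_of_mem_of_not_mem hz hv).symm,
        label_eq_of_reachable_labelGraph hsym hU2 hz hv⟩).reachable
  have hle : (comp (v, x)).ncard ≤ (comp (x, y)).ncard := hmax ⟨(v, x), hvx⟩
  have hlt := Set.ncard_le_ncard hsub (Set.toFinite _)
  rw [Set.ncard_insert_of_notMem hv (Set.toFinite _)] at hlt
  omega

theorem SymbolicUltrametric.not_isInducedP4 (hU : SymbolicUltrametric δ)
    (hsym : ∀ x y : X, x ≠ y → δ x y = δ y x) (c : Υ) {a b e d : X} :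
    ¬(labelGraph δ c).IsInducedP4 a b e d := by
  intro hP
  obtain ⟨hab, hae, had, hbe, hbd, hed⟩ := hP.pairwise_ne
  obtain ⟨hab', hbe', hed', hae', hbd', had'⟩ := hP
  simp only [labelGraph_adj hsym, not_and, ne_eq] at hab' hbe' hed' hae' hbd' had'
  have hbd_ad : δ b d = δ a d := by
    rcases Set.eq_or_eq_or_eq_of_ncard_le_two (hU.2 a b d hab had hbd) with h | h | h
    · exact (had' had (h ▸ hab'.2)).elim
    · exact (hbd' hbd (h ▸ hab'.2)).elim
    · exact h.symm
  have had_ae : δ a d = δ a e := by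
    rcases Set.eq_or_eq_or_eq_of_ncard_le_two (hU.2 a e d hae had hed) with h | h | h
    · exact h.symm
    · exact (hae' hae (h ▸ hed'.2)).elim
    · exact (had' had (h ▸ hed'.2)).elim
  exact hU.1 ⟨a, b, e, d, hab, hae, had, hbe, hbd, hed, hab'.2.trans hbe'.2.symm,
    hbe'.2.trans hed'.2.symm, hbd_ad, had_ae, hab'.2 ▸ fun h => hbd' hbd h.symm⟩

theorem SymbolicUltrametric.exists_not_preconnected [Finite X] [Nontrivial X]
    (hU : SymbolicUltrametric δ) (hsym : ∀ x y : X, x ≠ y → δ x y = δ y x) :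
    ∃ c, ¬(labelGraph δ c)ᶜ.Preconnected := by
  obtain ⟨c, hc⟩ := exists_preconnected_labelGraph hsym hU.2
  refine ⟨c, fun hc' => ?_⟩
  obtain ⟨a, b, e, d, hP⟩ := SimpleGraph.exists_isInducedP4_of_preconnected_compl hc hc'
  exact hU.not_isInducedP4 hsym c hP

end SymbolicUltrametric

/-- For a symmetric map `δ` on a finite set `X` with `|X| ≥ 2`, the
quotient `δ / Mmax(δ)` is either complete or prime; moreover, if `δ` is a symbolic
ultrametric then this quotient is complete. -/
theorem stmt_12 {X Υ : Type*} [Fintype X] (h2 : 2 ≤ Fintype.card X)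
    (δ : X → X → Υ) (hsym : ∀ x y : X, x ≠ y → δ x y = δ y x) :
    (QuotientComplete δ Set.univ ∨ QuotientPrime δ Set.univ) ∧
    (SymbolicUltrametric δ → QuotientComplete δ Set.univ) := by
  have : Nontrivial X := Fintype.one_lt_card_iff_nontrivial.1 h2
  have complete_of : (∃ c, ¬(labelGraph δ c)ᶜ.Preconnected) → QuotientComplete δ Set.univ :=
    fun ⟨_, hc⟩ => quotientComplete_of_not_preconnected hsym hc
  exact ⟨or_iff_not_imp_right.2 fun hp =>
      complete_of (exists_not_preconnected_of_not_quotientPrime hsym hp),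
    fun hU => complete_of (hU.exists_not_preconnected hsym)⟩
end
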